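/- arXiv:1403.2657 — 7 statements merged into one kernel-verified Lean document; each statement's English description precedes it below -/
import Mathlib

section
/- Let P be a polytope in ℝ^d with Hausdorff distance to the unit ball at most ε ≤ 1/36. Then every face of P is contained in a ball of radius 2√ε; in particular, every point of the boundary ∂P is at distance at most 2√ε from some vertex of P. -/
/-!
If `d_H(P, B) ≤ ε` for the unit ball `B`, then `B_{1-ε}(0) ⊆ P ⊆ B_{1+ε}(0)`. A proper face of
`P` maximises a linear functional `⟪w, ·⟫`, so by the inner ball it lies in the cap
`{x ∈ B_{1+ε}(0) | ⟪w, x⟫ ≥ (1 - ε) ‖w‖}`, which fits in the ball of radius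
`√((1 + ε)² - (1 - ε)²) = 2√ε` around `(1 - ε) w / ‖w‖`. A boundary point `x` lies in a proper
face `F` (supporting hyperplane); by Krein–Milman it is in the closed convex hull of the extreme
points of `F`, which are vertices of `P`. A point of the closed convex hull of a set contained in
a ball of radius `r` is within `r` of some point of that set, so `x` is within `2√ε` of a vertex.
-/

open Bornology Metric Set RealInnerProductSpace

section HausdorffDistance

variable {α : Type*} [PseudoMetricSpace α] {s t : Set α} {ε : ℝ}

theorem Metric.exists_dist_le_of_hausdorffDist_le (hs : IsCompact s) (hs' : s.Nonempty)
    (ht : IsBounded t) (h : hausdorffDist t s ≤ ε) {y : α} (hy : y ∈ t) :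
    ∃ x ∈ s, dist y x ≤ ε := by
  obtain ⟨x, hx, hyx⟩ := hs.exists_infDist_eq_dist hs' y
  have hfin : hausdorffEDist t s ≠ ⊤ :=
    hausdorffEDist_ne_top_of_nonempty_of_bounded ⟨y, hy⟩ hs' ht hs.isBounded
  exact ⟨x, hx, hyx ▸ (infDist_le_hausdorffDist_of_mem hy hfin).trans h⟩

theorem Metric.subset_closedBall_of_hausdorffDist_closedBall_le [ProperSpace α] {c : α} {r : ℝ}
    (hr : 0 ≤ r) (ht : IsBounded t) (h : hausdorffDist t (closedBall c r) ≤ ε) :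
    t ⊆ closedBall c (r + ε) := by
  intro y hy
  obtain ⟨x, hx, hyx⟩ := exists_dist_le_of_hausdorffDist_le (isCompact_closedBall c r)
    (nonempty_closedBall.2 hr) ht h hy
  rw [mem_closedBall] at hx ⊢
  linarith [dist_triangle y x c]

end HausdorffDistance

section InnerProductSpace

variable {E : Type*} [NormedAddCommGroup E] [InnerProductSpace ℝ E]

theorem exists_mem_closedBall_inner_eq (w : E) {r : ℝ} (hr : 0 ≤ r) :
    ∃ y ∈ closedBall (0 : E) r, ⟪w, y⟫ = r * ‖w‖ := by
  rcases eq_or_ne w 0 with rfl | hw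
  · exact ⟨0, mem_closedBall_self hr, by simp⟩
  have hw' : ‖w‖ ≠ 0 := norm_ne_zero_iff.2 hw
  refine ⟨(r / ‖w‖) • w, ?_, ?_⟩
  · rw [mem_closedBall_zero_iff, norm_smul, Real.norm_eq_abs, abs_of_nonneg (by positivity),
      div_mul_cancel₀ r hw']
  · rw [real_inner_smul_right, real_inner_self_eq_norm_sq]
    field_simp

theorem dist_le_dist_iff_inner (y a b : E) :
    dist y a ≤ dist y b ↔ 2 * ⟪y, b - a⟫ ≤ ‖b‖ ^ 2 - ‖a‖ ^ 2 := by
  rw [dist_eq_norm, dist_eq_norm, ← sq_le_sq₀ (norm_nonneg _) (norm_nonneg _),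
    norm_sub_sq_real, norm_sub_sq_real, inner_sub_right]
  constructor <;> intro h <;> linarith

theorem exists_dist_le_of_mem_closure_convexHull {S : Set E} {c x : E} {r : ℝ}
    (hS : S ⊆ closedBall c r) (hx : x ∈ closure (convexHull ℝ S)) :
    ∃ s ∈ S, dist x s ≤ r := by
  by_contra! hfar
  -- `S`, hence `x`, lies in the half-space of points at least as close to `c` as to `x`;
  -- for `x` itself this forces `x = c`.
  have hH : {y | dist y c ≤ dist y x} =
      innerSL ℝ (x - c) ⁻¹' Iic ((‖x‖ ^ 2 - ‖c‖ ^ 2) / 2) := by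
    ext y
    simp only [mem_ofPred_eq, mem_preimage, mem_Iic, innerSL_apply_apply, real_inner_comm (x - c),
      dist_le_dist_iff_inner]
    constructor <;> intro h <;> linarith
  have hSH : S ⊆ {y | dist y c ≤ dist y x} := fun s hs =>
    (mem_closedBall.1 (hS hs)).trans (dist_comm x s ▸ hfar s hs).le
  rw [hH] at hSH
  have hxH : x ∈ innerSL ℝ (x - c) ⁻¹' Iic ((‖x‖ ^ 2 - ‖c‖ ^ 2) / 2) :=
    closure_minimal (convexHull_min hSH ((convex_Iic _).linear_preimage _))
      (isClosed_Iic.preimage (innerSL ℝ _).continuous) hx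
  rw [← hH, mem_ofPred_eq, dist_self, dist_le_zero] at hxH
  obtain ⟨s, hs⟩ : S.Nonempty := by
    by_contra! hSe
    simp [hSe] at hx
  exact (hfar s hs).not_ge (by simpa [hxH, dist_comm] using hS hs)

theorem closedBall_subset_of_hausdorffDist_closedBall_le [CompleteSpace E] {P : Set E}
    {r ε : ℝ} (hr : 0 ≤ r) (hPc : IsCompact P) (hPconv : Convex ℝ P) (hP : P.Nonempty)
    (h : hausdorffDist P (closedBall 0 r) ≤ ε) : closedBall 0 (r - ε) ⊆ P := by
  intro z hz
  by_contra hzP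
  obtain ⟨f, u, hfP, hzu⟩ := geometric_hahn_banach_closed_point hPconv hPc.isClosed hzP
  obtain ⟨w, rfl⟩ := (InnerProductSpace.toDual ℝ E).surjective f
  simp only [InnerProductSpace.toDual_apply_apply] at hfP hzu
  obtain ⟨n, hn, hwn⟩ := exists_mem_closedBall_inner_eq w hr
  obtain ⟨p, hp, hnp⟩ := exists_dist_le_of_hausdorffDist_le hPc hP isBounded_closedBall
    (hausdorffDist_comm.trans_le h) hn
  -- `p ∈ P` is `ε`-close to the point `n` of the ball furthest in direction `w`,
  -- so `⟪w, p⟫ ≥ (r - ε) ‖w‖ ≥ ⟪w, z⟫`.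
  have hnear : ⟪w, n - p⟫ ≤ ‖w‖ * ε :=
    (real_inner_le_norm w _).trans
      (mul_le_mul_of_nonneg_left (dist_eq_norm n p ▸ hnp) (norm_nonneg w))
  have hwz : ⟪w, z⟫ ≤ ‖w‖ * (r - ε) :=
    (real_inner_le_norm w z).trans
      (mul_le_mul_of_nonneg_left (mem_closedBall_zero_iff.1 hz) (norm_nonneg w))
  rw [inner_sub_right] at hnear
  linarith [hfP p hp]

theorem dist_smul_le_sqrt_of_le_inner {u x : E} {ρ R : ℝ} (hu : ‖u‖ = 1) (hρ : 0 ≤ ρ)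
    (hux : ρ ≤ ⟪u, x⟫) (hx : ‖x‖ ≤ R) : dist x (ρ • u) ≤ √(R ^ 2 - ρ ^ 2) := by
  rw [dist_eq_norm]
  apply Real.le_sqrt_of_sq_le
  rw [norm_sub_sq_real, real_inner_smul_right, norm_smul, Real.norm_eq_abs, abs_of_nonneg hρ, hu,
    real_inner_comm]
  nlinarith [norm_nonneg x]

theorem ContinuousLinearMap.toExposed_subset_closedBall [CompleteSpace E] {P : Set E} {ρ R : ℝ}
    (hρ : 0 ≤ ρ) (hin : closedBall 0 ρ ⊆ P) (hout : P ⊆ closedBall 0 R)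
    {l : StrongDual ℝ E} (hl : l ≠ 0) : ∃ c, l.toExposed P ⊆ closedBall c √(R ^ 2 - ρ ^ 2) := by
  obtain ⟨w, rfl⟩ := (InnerProductSpace.toDual ℝ E).surjective l
  have hw : w ≠ 0 := by rintro rfl; exact hl (map_zero _)
  refine ⟨ρ • ‖w‖⁻¹ • w, fun x hx => ?_⟩
  obtain ⟨y, hy, hwy⟩ := exists_mem_closedBall_inner_eq w hρ
  have hmax : ρ * ‖w‖ ≤ ⟪w, x⟫ := by
    simpa only [hwy, InnerProductSpace.toDual_apply_apply] using hx.2 y (hin hy)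
  refine dist_smul_le_sqrt_of_le_inner (norm_smul_inv_norm hw) hρ ?_
    (mem_closedBall_zero_iff.1 (hout hx.1))
  rw [real_inner_smul_left, inv_mul_eq_div, le_div_iff₀ (norm_pos_iff.2 hw)]
  exact hmax

theorem IsExposed.exists_mem_extremePoints_dist_le {A F : Set E} {c x : E} {r : ℝ}
    (hF : IsExposed ℝ A F) (hA : IsCompact A) (hAconv : Convex ℝ A) (hFc : F ⊆ closedBall c r)
    (hx : x ∈ F) : ∃ v ∈ A.extremePoints ℝ, dist x v ≤ r := by
  rw [← closure_convexHull_extremePoints (hF.isCompact hA) (hF.convex hAconv)] at hx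
  obtain ⟨v, hv, hxv⟩ :=
    exists_dist_le_of_mem_closure_convexHull (extremePoints_subset.trans hFc) hx
  exact ⟨v, hF.isExtreme.extremePoints_subset_extremePoints hv, hxv⟩

end InnerProductSpace

/-- **Faces of a nearly spherical polytope are small.**
Let `P = conv(Vt)` be a polytope in `ℝ^d` whose Hausdorff distance to the closed unit ball is at
most `ε ≤ 1/36`.  Then every proper (nonempty exposed) face of `P` is contained in a ball of
radius `2√ε`; in particular, every point of the boundary `∂P` is at distance at most `2√ε`
from some vertex of `P`. -/
theorem faces_small_of_near_ball {d : ℕ}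
    (Vt : Finset (EuclideanSpace ℝ (Fin d)))
    (P : Set (EuclideanSpace ℝ (Fin d)))
    (hP : P = convexHull ℝ (Vt : Set (EuclideanSpace ℝ (Fin d))))
    (ε : ℝ) (hε : ε ≤ 1 / 36)
    (hHD : Metric.hausdorffDist P (Metric.closedBall 0 1) ≤ ε) :
    (∀ F : Set (EuclideanSpace ℝ (Fin d)), IsExposed ℝ P F → F.Nonempty → F ≠ P →
        ∃ c : EuclideanSpace ℝ (Fin d), F ⊆ Metric.closedBall c (2 * Real.sqrt ε)) ∧
      ∀ x ∈ frontier P, ∃ v ∈ Vt, dist x v ≤ 2 * Real.sqrt ε := by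
  obtain rfl | hne := P.eq_empty_or_nonempty
  · exact ⟨fun F hF hFne _ => absurd (hFne.mono hF.subset) not_nonempty_empty, by simp⟩
  have hPc : IsCompact P := hP ▸ Vt.finite_toSet.isCompact_convexHull ℝ
  have hPconv : Convex ℝ P := hP ▸ convex_convexHull ℝ _
  have hout := subset_closedBall_of_hausdorffDist_closedBall_le zero_le_one hPc.isBounded hHD
  have hin := closedBall_subset_of_hausdorffDist_closedBall_le zero_le_one hPc hPconv hne hHD
  have hface (l : StrongDual ℝ (EuclideanSpace ℝ (Fin d))) (hl : l ≠ 0) :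
      ∃ c, l.toExposed P ⊆ closedBall c (2 * √ε) := by
    have hradius : √((1 + ε) ^ 2 - (1 - ε) ^ 2) = 2 * √ε := by
      rw [show (1 + ε) ^ 2 - (1 - ε) ^ 2 = 2 ^ 2 * ε by ring, Real.sqrt_mul (by positivity),
        Real.sqrt_sq zero_le_two]
    exact hradius ▸ l.toExposed_subset_closedBall (by linarith) hin hout hl
  refine ⟨fun F hF hFne hFP => ?_, fun x hx => ?_⟩
  · obtain ⟨l, rfl⟩ := hF hFne
    refine hface l ?_
    rintro rfl
    exact hFP (by simp)
  · have hint : (interior P).Nonempty :=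
      ⟨0, interior_mono hin (mem_interior_iff_mem_nhds.2 (closedBall_mem_nhds 0 (by linarith)))⟩
    obtain ⟨l, hl, hlx⟩ := geometric_hahn_banach_of_nonempty_interior_point hPconv hx.2 hint
    obtain ⟨c, hc⟩ := hface l hl
    obtain ⟨v, hv, hxv⟩ :=
      ContinuousLinearMap.toExposed.isExposed.exists_mem_extremePoints_dist_le hPc hPconv hc
        ⟨hPc.isClosed.frontier_subset hx, hlx⟩
    exact ⟨v, extremePoints_convexHull_subset (hP ▸ hv), hxv⟩
end

section
/- Let P, P' be polytopes in ℝ^d with vertex set of P contained in the vertex set of P', and suppose d_H(P, B_1(0)) ≤ ε ≤ 1/36. Then d_H(P', B_1(0)) ≤ 6√ε. -/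
/-!
The polytope `P` lies in `B(0, 1 + ε)`, and `P` contains `B(0, 1 - ε)`, hence so does `P'`.
If a vertex `v` of `P'` had norm `R > 1 + 6√ε`, then in the direction `u = v / R` the polytope `P`
has a vertex `q` with `⟪u, q⟫ ≥ 1 - ε`. Since `q` is nearly as far out in direction `u` as the
ball while `v` is much further, the ray from `v` through `q` continues into `B(0, 1 - ε) ⊆ P'`,
so `q` lies strictly inside a segment of `P'`, contradicting that `q` is a vertex of `P'`. Hence
`P' ⊆ B(0, 1 + 6√ε)`, and the unit ball is `ε`-close to `P ⊆ P'`.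
-/

open Metric Set
open scoped RealInnerProductSpace

section LocallyConvex

variable {E : Type*} [AddCommGroup E] [Module ℝ E] [TopologicalSpace E] [T2Space E]
  [IsTopologicalAddGroup E] [ContinuousSMul ℝ E] [LocallyConvexSpace ℝ E]

theorem IsCompact.exists_mem_extremePoints_forall_le {s : Set E} (hs : IsCompact s)
    (hne : s.Nonempty) (l : StrongDual ℝ E) :
    ∃ y ∈ s.extremePoints ℝ, ∀ x ∈ s, l x ≤ l y := by
  obtain ⟨z, hzs, hz⟩ := hs.exists_isMaxOn hne l.continuous.continuousOn
  have hexp : IsExposed ℝ s {y ∈ s | ∀ x ∈ s, l x ≤ l y} := fun _ => ⟨l, rfl⟩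
  obtain ⟨y, hy⟩ := (hexp.isCompact hs).extremePoints_nonempty ⟨z, hzs, hz⟩
  exact ⟨y, hexp.isExtreme.extremePoints_subset_extremePoints hy, hy.1.2⟩

theorem Set.Finite.convexHull_extremePoints_convexHull {A : Set E} (hA : A.Finite) :
    convexHull ℝ ((convexHull ℝ A).extremePoints ℝ) = convexHull ℝ A := by
  have h := closure_convexHull_extremePoints (hA.isCompact_convexHull ℝ) (convex_convexHull ℝ A)
  rwa [((hA.subset extremePoints_convexHull_subset).isClosed_convexHull ℝ).closure_eq] at h

end LocallyConvex

theorem Metric.infDist_le_of_hausdorffDist_le {α : Type*} [PseudoMetricSpace α] {s t : Set α}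
    {x : α} {r : ℝ} (hs : Bornology.IsBounded s) (ht : Bornology.IsBounded t) (hne : t.Nonempty)
    (hx : x ∈ s) (h : hausdorffDist s t ≤ r) : infDist x t ≤ r :=
  (infDist_le_hausdorffDist_of_mem hx
    (hausdorffEDist_ne_top_of_nonempty_of_bounded ⟨x, hx⟩ hne hs ht)).trans h

section Normed

variable {E : Type*} [NormedAddCommGroup E] [NormedSpace ℝ E]

theorem Metric.infDist_closedBall_zero (x : E) {r : ℝ} (hr : 0 ≤ r) :
    infDist x (closedBall 0 r) = max (‖x‖ - r) 0 := by
  refine le_antisymm ?_ (max_le ?_ infDist_nonneg)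
  · rcases le_or_gt ‖x‖ r with hxr | hxr
    · rw [infDist_zero_of_mem (mem_closedBall_zero_iff.2 hxr)]
      exact le_max_right _ _
    have hx : 0 < ‖x‖ := hr.trans_lt hxr
    have hmem : (r / ‖x‖) • x ∈ closedBall (0 : E) r := by
      rw [mem_closedBall_zero_iff, norm_smul, Real.norm_of_nonneg (by positivity),
        div_mul_cancel₀ r hx.ne']
    calc infDist x (closedBall 0 r) ≤ dist x ((r / ‖x‖) • x) := infDist_le_dist_of_mem hmem
      _ = ‖x‖ - r := by
        have hcoef : 0 ≤ 1 - r / ‖x‖ := by rw [sub_nonneg, div_le_one hx]; exact hxr.le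
        have hvec : x - (r / ‖x‖) • x = (1 - r / ‖x‖) • x := by rw [sub_smul, one_smul]
        rw [dist_eq_norm, hvec, norm_smul, Real.norm_of_nonneg hcoef, sub_mul,
          one_mul, div_mul_cancel₀ r hx.ne']
      _ ≤ max (‖x‖ - r) 0 := le_max_left _ _
  · rw [le_infDist ⟨0, mem_closedBall_self hr⟩]
    intro y hy
    have := norm_sub_norm_le x y
    rw [← dist_eq_norm] at this
    linarith [mem_closedBall_zero_iff.1 hy]

theorem hausdorffDist_closedBall_zero_le {s : Set E} {ρ r : ℝ} (hρ : 0 ≤ ρ) (hr : 0 ≤ r)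
    (hs : s ⊆ closedBall 0 (ρ + r)) (h : ∀ y ∈ closedBall (0 : E) ρ, infDist y s ≤ r) :
    hausdorffDist s (closedBall 0 ρ) ≤ r := by
  refine hausdorffDist_le_of_infDist hr (fun x hx => ?_) h
  rw [infDist_closedBall_zero x hρ]
  exact max_le (by linarith [mem_closedBall_zero_iff.1 (hs hx)]) hr

end Normed

theorem four_mul_sq_mul_le_sq_mul {s R : ℝ} (hs0 : 0 ≤ s) (hs : s ≤ 1 / 6) (hR : 1 + 6 * s < R) :
    4 * s ^ 2 * (1 + R - s ^ 2) ≤ (1 - s ^ 2) ^ 2 * (R - 1 + s ^ 2) := by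
  nlinarith [mul_nonneg hs0 hs0, mul_nonneg (mul_nonneg hs0 hs0) hs0,
    mul_nonneg hs0 (sub_nonneg.2 hR.le), mul_nonneg (sub_nonneg.2 hs) hs0]

section InnerProduct

variable {E : Type*} [NormedAddCommGroup E] [InnerProductSpace ℝ E] {P : Set E} {ε : ℝ}

theorem exists_mem_inner_ge_of_infDist_le (hP : IsCompact P) (hne : P.Nonempty) {u : E}
    (hu : ‖u‖ = 1) (h : infDist u P ≤ ε) : ∃ p ∈ P, 1 - ε ≤ ⟪u, p⟫ := by
  obtain ⟨p, hp, hdist⟩ := hP.exists_infDist_eq_dist hne u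
  refine ⟨p, hp, ?_⟩
  have := real_inner_le_norm u (u - p)
  rw [inner_sub_right, real_inner_self_eq_norm_sq, hu, ← dist_eq_norm, ← hdist] at this
  linarith

theorem closedBall_subset_of_infDist_sphere_le [CompleteSpace E] (hP : IsCompact P)
    (hconv : Convex ℝ P) (hne : P.Nonempty) (h : ∀ u ∈ sphere (0 : E) 1, infDist u P ≤ ε) :
    closedBall 0 (1 - ε) ⊆ P := by
  intro x hx
  by_contra hxP
  obtain ⟨f, c, hfP, hfx⟩ := geometric_hahn_banach_closed_point hconv hP.isClosed hxP
  set a := (InnerProductSpace.toDual ℝ E).symm f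
  have hfa (y : E) : f y = ⟪a, y⟫ := InnerProductSpace.toDual_symm_apply.symm
  have ha : a ≠ 0 := by
    rintro ha
    obtain ⟨p, hp⟩ := hne
    have := (hfP p hp).trans hfx
    simp only [hfa, ha, inner_zero_left, lt_self_iff_false] at this
  have hw : ‖‖a‖⁻¹ • a‖ = 1 := norm_smul_inv_norm ha
  obtain ⟨p, hp, hwp⟩ :=
    exists_mem_inner_ge_of_infDist_le hP hne hw (h _ (mem_sphere_zero_iff_norm.2 hw))
  have hwx : ⟪‖a‖⁻¹ • a, x⟫ ≤ 1 - ε := by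
    have := real_inner_le_norm (‖a‖⁻¹ • a) x
    rw [hw, one_mul] at this
    exact this.trans (mem_closedBall_zero_iff.1 hx)
  have hpx : ⟪‖a‖⁻¹ • a, p⟫ < ⟪‖a‖⁻¹ • a, x⟫ := by
    simp only [real_inner_smul_left, ← hfa]
    gcongr
    exact (hfP p hp).trans hfx
  linarith

/-- The witness is `z = (q - t R u) / (1 - t)` with `t = (1 - ε) / (1 + R - ε)`, the value of `t`
that optimises the estimate of `‖z‖`. -/
theorem exists_mem_openSegment_smul_of_inner_ge {u q : E} {R : ℝ} (hε0 : 0 ≤ ε)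
    (hε : ε ≤ 1 / 36) (hu : ‖u‖ = 1) (huq : 1 - ε ≤ ⟪u, q⟫) (hq : ‖q‖ ≤ 1 + ε)
    (hR : 1 + 6 * √ε < R) : ∃ z ∈ closedBall (0 : E) (1 - ε), q ∈ openSegment ℝ (R • u) z := by
  have hs : √ε ≤ 1 / 6 := by
    rw [show (1 / 6 : ℝ) = √(1 / 36) by
      rw [eq_comm, Real.sqrt_eq_iff_mul_self_eq] <;> norm_num]
    exact Real.sqrt_le_sqrt hε
  have hpoly := four_mul_sq_mul_le_sq_mul (Real.sqrt_nonneg ε) hs hR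
  rw [Real.sq_sqrt hε0] at hpoly
  have hR1 : 1 < R := by linarith [Real.sqrt_nonneg ε]
  have hD : 0 < 1 + R - ε := by linarith
  set t := (1 - ε) / (1 + R - ε) with ht
  have ht0 : 0 < t := div_pos (by linarith) hD
  have ht1 : t < 1 := (div_lt_one hD).2 (by linarith)
  have hsq : ‖q - (t * R) • u‖ ^ 2 ≤ ((1 - t) * (1 - ε)) ^ 2 := by
    have hexpand : ‖q - (t * R) • u‖ ^ 2 = ‖q‖ ^ 2 - 2 * (t * R) * ⟪u, q⟫ + (t * R) ^ 2 := by
      rw [norm_sub_sq_real, real_inner_smul_right, real_inner_comm, norm_smul,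
        Real.norm_of_nonneg (by positivity), hu]
      ring
    have hgap : ((1 - t) * (1 - ε)) ^ 2 - ((1 + ε) ^ 2 - 2 * (t * R) * (1 - ε) + (t * R) ^ 2)
        = ((1 - ε) ^ 2 * (R - 1 + ε) - 4 * ε * (1 + R - ε)) / (1 + R - ε) := by
      rw [ht]
      field_simp
      ring
    have hgap_nonneg : 0 ≤ ((1 - ε) ^ 2 * (R - 1 + ε) - 4 * ε * (1 + R - ε)) / (1 + R - ε) :=
      div_nonneg (by linarith) hD.le
    have hq2 : ‖q‖ ^ 2 ≤ (1 + ε) ^ 2 := pow_le_pow_left₀ (norm_nonneg q) hq 2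
    rw [hexpand]
    linarith [mul_le_mul_of_nonneg_left huq (by positivity : 0 ≤ 2 * (t * R))]
  have hnorm : ‖q - (t * R) • u‖ ≤ (1 - t) * (1 - ε) :=
    (pow_le_pow_iff_left₀ (norm_nonneg _) (mul_nonneg (by linarith) (by linarith))
      two_ne_zero).1 hsq
  refine ⟨(1 - t)⁻¹ • (q - (t * R) • u), ?_, t, 1 - t, ht0, by linarith, by ring, ?_⟩
  · rw [mem_closedBall_zero_iff, norm_smul, Real.norm_of_nonneg (inv_nonneg.2 (by linarith)),
      inv_mul_le_iff₀ (by linarith)]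
    exact hnorm
  · rw [smul_inv_smul₀ (by linarith), smul_smul]
    abel

theorem norm_le_of_mem_extremePoints {P' : Set E} (hP : IsCompact P) (hne : P.Nonempty)
    (hε0 : 0 ≤ ε) (hε : ε ≤ 1 / 36) (hnorm : ∀ x ∈ P, ‖x‖ ≤ 1 + ε)
    (hdist : ∀ u ∈ sphere (0 : E) 1, infDist u P ≤ ε) (hball : closedBall 0 (1 - ε) ⊆ P')
    (hsub : P.extremePoints ℝ ⊆ P'.extremePoints ℝ) {v : E} (hv : v ∈ P'.extremePoints ℝ) :
    ‖v‖ ≤ 1 + 6 * √ε := by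
  by_contra! hlt
  have hv0 : v ≠ 0 := by
    rintro rfl
    linarith [norm_zero (E := E), Real.sqrt_nonneg ε]
  have hu : ‖‖v‖⁻¹ • v‖ = 1 := norm_smul_inv_norm hv0
  obtain ⟨p, hp, hup⟩ :=
    exists_mem_inner_ge_of_infDist_le hP hne hu (hdist _ (mem_sphere_zero_iff_norm.2 hu))
  obtain ⟨q, hq, hpq⟩ := hP.exists_mem_extremePoints_forall_le hne (innerSL ℝ (‖v‖⁻¹ • v))
  simp only [innerSL_apply_apply] at hpq
  obtain ⟨z, hz, hqvz⟩ := exists_mem_openSegment_smul_of_inner_ge hε0 hε hu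
    (hup.trans (hpq p hp)) (hnorm q hq.1) hlt
  rw [smul_inv_smul₀ (norm_ne_zero_iff.2 hv0)] at hqvz
  obtain ⟨rfl, -⟩ := (hsub hq).2 hv.1 (hball hz) hqvz
  nlinarith [hnorm v hq.1, Real.sq_sqrt hε0, Real.sqrt_nonneg ε]

end InnerProduct

/-- **Polytopes on the vertices of a nearly spherical polytope stay near the ball.**
Let `P, P'` be polytopes in `ℝ^d` such that every vertex (extreme point) of `P` is a vertex of
`P'`, and suppose the Hausdorff distance of `P` to the closed unit ball is at most `ε ≤ 1/36`.
Then the Hausdorff distance of `P'` to the closed unit ball is at most `6√ε`. -/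
theorem hausdorffDist_le_of_vertices_subset {d : ℕ}
    (Vt Vt' : Finset (EuclideanSpace ℝ (Fin d))) (hVt : Vt.Nonempty)
    (P P' : Set (EuclideanSpace ℝ (Fin d)))
    (hP : P = convexHull ℝ (Vt : Set (EuclideanSpace ℝ (Fin d))))
    (hP' : P' = convexHull ℝ (Vt' : Set (EuclideanSpace ℝ (Fin d))))
    (hsub : Set.extremePoints ℝ P ⊆ Set.extremePoints ℝ P')
    (ε : ℝ) (hε : ε ≤ 1 / 36)
    (hHD : Metric.hausdorffDist P (Metric.closedBall 0 1) ≤ ε) :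
    Metric.hausdorffDist P' (Metric.closedBall 0 1) ≤ 6 * Real.sqrt ε := by
  have hε0 : 0 ≤ ε := hausdorffDist_nonneg.trans hHD
  have hε6 : ε ≤ 6 * √ε := by nlinarith [Real.sq_sqrt hε0, Real.sqrt_nonneg ε]
  have hPc : IsCompact P := hP ▸ Vt.finite_toSet.isCompact_convexHull ℝ
  have hne : P.Nonempty := hP ▸ convexHull_nonempty_iff.2 (Finset.coe_nonempty.2 hVt)
  have hPP' : P ⊆ P' := by
    rw [hP, ← Vt.finite_toSet.convexHull_extremePoints_convexHull, ← hP]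
    exact convexHull_min (hsub.trans extremePoints_subset) (hP' ▸ convex_convexHull ℝ _)
  have hnorm : ∀ x ∈ P, ‖x‖ ≤ 1 + ε := fun x hx => by
    have := infDist_le_of_hausdorffDist_le hPc.isBounded isBounded_closedBall
      ⟨0, mem_closedBall_self zero_le_one⟩ hx hHD
    rw [infDist_closedBall_zero x zero_le_one] at this
    linarith [le_max_left (‖x‖ - 1) 0]
  have hdist : ∀ y ∈ closedBall 0 1, infDist y P ≤ ε := fun y hy =>
    infDist_le_of_hausdorffDist_le isBounded_closedBall hPc.isBounded hne hy
      (hausdorffDist_comm.trans_le hHD)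
  have hball : closedBall 0 (1 - ε) ⊆ P :=
    closedBall_subset_of_infDist_sphere_le hPc (hP ▸ convex_convexHull ℝ _) hne
      fun u hu => hdist u (sphere_subset_closedBall hu)
  have hP'ball : P' ⊆ closedBall 0 (1 + 6 * √ε) := by
    rw [hP', ← Vt'.finite_toSet.convexHull_extremePoints_convexHull, ← hP']
    refine convexHull_min (fun v hv => mem_closedBall_zero_iff.2 ?_) (convex_closedBall _ _)
    exact norm_le_of_mem_extremePoints hPc hne hε0 hε hnorm
      (fun u hu => hdist u (sphere_subset_closedBall hu)) (hball.trans hPP') hsub hv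
  refine hausdorffDist_closedBall_zero_le zero_le_one (by positivity) hP'ball fun y hy => ?_
  exact (infDist_le_infDist_of_subset hPP' hne).trans ((hdist y hy).trans hε6)
end

section
/- Let C be a simplicial complex that collapses to a subcomplex C', and let D be a simplicial complex such that D ∪ C is a simplicial complex with D ∩ C = C'. Then D ∪ C collapses to D. -/
/-- An (abstract, finite) simplicial complex: a finite family of nonempty finite vertex sets
that is closed under passing to nonempty subsets. -/
def IsComplex {V : Type*} [DecidableEq V] (C : Finset (Finset V)) : Prop :=
  ∀ σ ∈ C, σ.Nonempty ∧ ∀ τ ⊆ σ, τ.Nonempty → τ ∈ C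

/-- An elementary collapse: deletion of a free face `σ` (a nonempty face strictly contained in
exactly one other face `τ`) together with `τ`. -/
def ElemCollapse {V : Type*} [DecidableEq V] (C C' : Finset (Finset V)) : Prop :=
  ∃ σ τ : Finset V, σ ∈ C ∧ τ ∈ C ∧ σ ⊂ τ ∧ σ.Nonempty ∧
    (∀ ρ ∈ C, σ ⊂ ρ → ρ = τ) ∧ C' = C \ {σ, τ}

/-- `C` collapses onto `C'`: `C'` is obtained from `C` by a sequence of elementary collapses. -/
def Collapses {V : Type*} [DecidableEq V] (C C' : Finset (Finset V)) : Prop :=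
  Relation.ReflTransGen ElemCollapse C C'

lemma collapses_subset {V : Type*} [DecidableEq V] {C C' : Finset (Finset V)}
    (h : Collapses C C') : C' ⊆ C := by
  induction h with
  | refl => exact subset_rfl
  | tail _ hstep ih =>
    obtain ⟨σ, τ, _, _, _, _, _, rfl⟩ := hstep
    exact (Finset.sdiff_subset).trans ih

lemma aux_union_collapses {V : Type*} [DecidableEq V] (D C' : Finset (Finset V))
    (hD : IsComplex D) :
    ∀ X, Collapses X C' → D ∩ X = C' → Collapses (D ∪ X) (D ∪ C') := by
  intro X h
  induction h using Relation.ReflTransGen.head_induction_on with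
  | refl => intro _; exact Relation.ReflTransGen.refl
  | head hstep hrest ih =>
    rename_i X Y
    intro hcap
    obtain ⟨σ, τ, hσX, hτX, hst, hσne, huniq, rfl⟩ := hstep
    have hsub : C' ⊆ X \ {σ, τ} := collapses_subset hrest
    have hσC' : σ ∉ C' := fun hm => by
      have := hsub hm; simp at this
    have hτC' : τ ∉ C' := fun hm => by
      have := hsub hm; simp at this
    have hσD : σ ∉ D := fun hm => hσC' (hcap ▸ Finset.mem_inter.mpr ⟨hm, hσX⟩)
    have hτD : τ ∉ D := fun hm => hτC' (hcap ▸ Finset.mem_inter.mpr ⟨hm, hτX⟩)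
    have hcap' : D ∩ (X \ {σ, τ}) = C' := by
      ext ρ
      simp only [Finset.mem_inter, Finset.mem_sdiff, Finset.mem_insert,
        Finset.mem_singleton]
      constructor
      · rintro ⟨hρD, hρX, _⟩
        exact hcap ▸ Finset.mem_inter.mpr ⟨hρD, hρX⟩
      · intro hρ
        have hm := hcap ▸ hρ
        have := Finset.mem_inter.mp hm
        refine ⟨this.1, this.2, ?_⟩
        rintro (rfl | rfl)
        · exact hσD this.1
        · exact hτD this.1
    refine Relation.ReflTransGen.head ?_ (ih hcap')
    refine ⟨σ, τ, Finset.mem_union_right _ hσX, Finset.mem_union_right _ hτX, hst, hσne,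
      ?_, ?_⟩
    · intro ρ hρ hσρ
      rcases Finset.mem_union.mp hρ with hρD | hρX'
      · exact absurd ((hD ρ hρD).2 σ hσρ.subset hσne) hσD
      · exact huniq ρ hρX' hσρ
    · ext ρ
      simp only [Finset.mem_union, Finset.mem_sdiff, Finset.mem_insert, Finset.mem_singleton]
      constructor
      · rintro (hρD | ⟨hρX', hne⟩)
        · refine ⟨Or.inl hρD, ?_⟩
          rintro (rfl | rfl)
          · exact hσD hρD
          · exact hτD hρD
        · exact ⟨Or.inr hρX', hne⟩
      · rintro ⟨hρD | hρX', hne⟩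
        · exact Or.inl hρD
        · exact Or.inr ⟨hρX', hne⟩

/-- **Collapsing a union.** Let `C` be a simplicial complex that collapses to a subcomplex `C'`,
and let `D` be a simplicial complex such that `D ∪ C` is a simplicial complex.
If `D ∩ C = C'`, then `D ∪ C` collapses onto `D`. -/
theorem union_collapses_of_collapses {V : Type*} [DecidableEq V]
    (C C' D : Finset (Finset V)) (hC : IsComplex C) (hD : IsComplex D)
    (h : Collapses C C') (hcap : D ∩ C = C') :
    Collapses (D ∪ C) D := by
  have := aux_union_collapses D C' hD C h hcap
  have hC'D : C' ⊆ D := hcap ▸ Finset.inter_subset_left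
  rwa [Finset.union_eq_left.mpr hC'D] at this
end

section
/- Let C be a simplicial complex and v a vertex of C such that the link Lk(v,C) collapses to a subcomplex S. Then C collapses to (C − v) ∪ (v ∗ S). In particular, if Lk(v,C) is collapsible then C collapses to the deletion C − v. -/
/-- The link of a vertex `v` in `C`. -/
def lkv {V : Type*} [DecidableEq V] (v : V) (C : Finset (Finset V)) : Finset (Finset V) :=
  C.filter fun σ => v ∉ σ ∧ insert v σ ∈ C

/-- The deletion of a vertex `v` from `C` (all faces not containing `v`). -/
def delv {V : Type*} [DecidableEq V] (v : V) (C : Finset (Finset V)) : Finset (Finset V) :=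
  C.filter fun σ => v ∉ σ

/-- The cone (join) of a vertex `v` over a complex `S`. -/
def conev {V : Type*} [DecidableEq V] (v : V) (S : Finset (Finset V)) : Finset (Finset V) :=
  S ∪ S.image (insert v) ∪ {({v} : Finset V)}


section

open Finset

variable {V : Type*} [DecidableEq V]

@[simp] lemma mem_lkv {v : V} {C : Finset (Finset V)} {σ : Finset V} :
    σ ∈ lkv v C ↔ σ ∈ C ∧ v ∉ σ ∧ insert v σ ∈ C := by
  simp [lkv]

@[simp] lemma mem_delv {v : V} {C : Finset (Finset V)} {σ : Finset V} :
    σ ∈ delv v C ↔ σ ∈ C ∧ v ∉ σ := by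
  simp [delv]

@[simp] lemma mem_conev {v : V} {S : Finset (Finset V)} {ρ : Finset V} :
    ρ ∈ conev v S ↔ ρ = {v} ∨ ρ ∈ S ∨ ∃ σ ∈ S, insert v σ = ρ := by
  simp [conev]

lemma Collapses.subset {A B : Finset (Finset V)} (h : Collapses A B) : B ⊆ A := by
  induction h with
  | refl => rfl
  | tail _ h ih =>
    obtain ⟨σ, τ, -, -, -, -, -, rfl⟩ := h
    exact sdiff_subset.trans ih

lemma Finset.insert_ne_singleton_of_notMem {v : V} {σ : Finset V} (hσ : σ.Nonempty)
    (hv : v ∉ σ) : insert v σ ≠ {v} := by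
  intro h
  obtain ⟨x, hx⟩ := hσ
  have hxv : x = v := mem_singleton.1 (h ▸ mem_insert_of_mem hx)
  exact hv (hxv ▸ hx)

lemma Finset.insert_ssubset_insert_iff {v : V} {σ τ : Finset V} (hσ : v ∉ σ) (hτ : v ∉ τ) :
    insert v σ ⊂ insert v τ ↔ σ ⊂ τ := by
  simp only [ssubset_iff_subset_ne, insert_subset_insert_iff hσ, ne_eq,
    insert_erase_invOn.2.injOn.eq_iff hσ hτ]

section Cone

variable {v : V} {D L L' : Finset (Finset V)}

lemma union_conev_sdiff {P : Finset (Finset V)} (hD : ∀ ρ ∈ D, v ∉ ρ)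
    (hL : L ⊆ D) (hP : P ⊆ D) (hPne : ∀ σ ∈ P, σ.Nonempty) :
    D ∪ conev v (L \ P) = (D ∪ conev v L) \ P.image (insert v) := by
  have hcone : ∀ σ, insert v σ ∉ D := fun σ h => hD _ h (mem_insert_self v σ)
  have hinj : ∀ σ ∈ D, ∀ τ ∈ D, insert v σ = insert v τ → σ = τ := fun σ hσ τ hτ h =>
    insert_erase_invOn.2.injOn (hD σ hσ) (hD τ hτ) h
  have hsingle : ∀ σ ∈ P, insert v σ ≠ {v} := fun σ hσ =>
    insert_ne_singleton_of_notMem (hPne σ hσ) (hD σ (hP hσ))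
  ext ρ
  simp only [mem_union, mem_conev, mem_sdiff, mem_image]
  grind

lemma insert_mem_union_conev {σ : Finset V} (hσ : σ ∈ L) : insert v σ ∈ D ∪ conev v L :=
  mem_union_right D (mem_conev.2 (.inr (.inr ⟨σ, hσ, rfl⟩)))

lemma ElemCollapse.union_conev (hD : ∀ ρ ∈ D, v ∉ ρ) (hL : L ⊆ D) (h : ElemCollapse L L') :
    ElemCollapse (D ∪ conev v L) (D ∪ conev v L') := by
  obtain ⟨σ, τ, hσ, hτ, hστ, hσne, hfree, rfl⟩ := h
  have hvσ := hD σ (hL hσ)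
  have hvτ := hD τ (hL hτ)
  refine ⟨insert v σ, insert v τ, insert_mem_union_conev hσ, insert_mem_union_conev hτ,
    (insert_ssubset_insert_iff hvσ hvτ).2 hστ, insert_nonempty v σ, ?_, ?_⟩
  · intro ρ hρ hσρ
    have hvρ : v ∈ ρ := hσρ.subset (mem_insert_self v σ)
    simp only [mem_union, mem_conev] at hρ
    obtain hρD | rfl | hρL | ⟨ρ', hρ', rfl⟩ := hρ
    · exact absurd hvρ (hD ρ hρD)
    · exact absurd (singleton_subset_iff.2 (mem_insert_self v σ)) hσρ.not_subset
    · exact absurd hvρ (hD ρ (hL hρL))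
    · rw [hfree ρ' hρ' ((insert_ssubset_insert_iff hvσ (hD ρ' (hL hρ'))).1 hσρ)]
  · rw [union_conev_sdiff hD hL (by simp [insert_subset_iff, hL hσ, hL hτ])
      (by simp [hσne, hσne.mono hστ.subset])]
    simp

lemma Collapses.union_conev (hD : ∀ ρ ∈ D, v ∉ ρ) (hL : L ⊆ D) (h : Collapses L L') :
    Collapses (D ∪ conev v L) (D ∪ conev v L') := by
  induction h with
  | refl => exact .refl
  | tail hLL' h ih => exact ih.tail (h.union_conev hD ((Collapses.subset hLL').trans hL))

lemma ElemCollapse.union_conev_singleton {w : V} (hD : ∀ ρ ∈ D, v ∉ ρ) (hw : {w} ∈ D) :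
    ElemCollapse (D ∪ conev v {{w}}) D := by
  have hvw : v ∉ ({w} : Finset V) := hD {w} hw
  refine ⟨{v}, insert v {w}, by simp, insert_mem_union_conev (mem_singleton_self _),
    pair_comm v w ▸ ssubset_insert (by simpa [eq_comm] using hvw),
    singleton_nonempty v, ?_, ?_⟩
  · intro ρ hρ hvρ
    simp only [mem_union, mem_conev, mem_singleton, exists_eq_left] at hρ
    grind
  · ext ρ
    simp only [mem_union, mem_conev, mem_singleton, exists_eq_left, mem_sdiff, mem_insert]
    grind

end Cone

lemma lkv_subset_delv (v : V) (C : Finset (Finset V)) : lkv v C ⊆ delv v C := fun σ hσ => by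
  simp_all

lemma delv_union_conev_lkv {v : V} {C : Finset (Finset V)} (hC : IsComplex C)
    (hv : {v} ∈ C) : delv v C ∪ conev v (lkv v C) = C := by
  ext ρ
  by_cases hvρ : v ∈ ρ
  · simp only [mem_union, mem_delv, hvρ, not_true_eq_false, and_false, false_and, false_or,
      mem_conev, mem_lkv]
    refine ⟨by rintro (rfl | ⟨σ, ⟨-, -, hσ⟩, rfl⟩) <;> assumption, fun hρ => ?_⟩
    refine or_iff_not_imp_left.2 fun hρv => ⟨ρ.erase v,
      ⟨?_, notMem_erase v ρ, by rwa [insert_erase hvρ]⟩, insert_erase hvρ⟩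
    exact (hC ρ hρ).2 _ (erase_subset v ρ)
      ((erase_nonempty hvρ).2 ((nontrivial_iff_ne_singleton hvρ).2 hρv))
  · simp only [mem_union, mem_delv, hvρ, mem_conev, mem_lkv]
    grind

end

/-- **Collapsing along a vertex link.** Let `C` be a simplicial complex and `v` a vertex of `C`.
If the link `Lk(v,C)` collapses to a subcomplex `S`, then `C` collapses to `(C − v) ∪ (v ∗ S)`.
In particular, if `Lk(v,C)` is collapsible, then `C` collapses to the deletion `C − v`. -/
theorem collapse_along_link {V : Type*} [DecidableEq V]
    (C : Finset (Finset V)) (v : V) (hC : IsComplex C) (hv : ({v} : Finset V) ∈ C) :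
    (∀ S ⊆ lkv v C, Collapses (lkv v C) S → Collapses C (delv v C ∪ conev v S)) ∧
      ((∃ w : V, Collapses (lkv v C) {({w} : Finset V)}) → Collapses C (delv v C)) := by
  have hD : ∀ ρ ∈ delv v C, v ∉ ρ := fun ρ hρ => (mem_delv.1 hρ).2
  have link : ∀ S, Collapses (lkv v C) S → Collapses C (delv v C ∪ conev v S) := fun S hS => by
    simpa only [delv_union_conev_lkv hC hv] using hS.union_conev hD (lkv_subset_delv v C)
  refine ⟨fun S _ hS => link S hS, fun ⟨w, hw⟩ => (link _ hw).tail ?_⟩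
  exact ElemCollapse.union_conev_singleton hD
    (lkv_subset_delv v C (hw.subset (Finset.mem_singleton_self _)))
end

section
/- Let (C,D) be an out-j collapsible pair with D non-empty. Then the number of outwardly matched j-faces of D is independent of the chosen out-j collapsing sequence and equals (−1)^j·(χ(D) − 1), where χ is the Euler characteristic. -/
/-- `IsCollapseSeq C L C'` : the list `L` of matching pairs `(σ, τ)` records a valid sequence of
elementary collapses transforming `C` into `C'` (each step removes a free face `σ` together
with the unique face `τ` strictly containing it). -/
def IsCollapseSeq {V : Type*} [DecidableEq V] :
    Finset (Finset V) → List (Finset V × Finset V) → Finset (Finset V) → Prop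
  | C, [], C' => C = C'
  | C, p :: L, C' =>
      p.1 ∈ C ∧ p.2 ∈ C ∧ p.1 ⊂ p.2 ∧ p.1.Nonempty ∧
        (∀ ρ ∈ C, p.1 ⊂ ρ → ρ = p.2) ∧ IsCollapseSeq (C \ {p.1, p.2}) L C'

/-- The (non-reduced) Euler characteristic `χ(D) = Σ_{σ ∈ D} (−1)^{dim σ}` of a complex. -/
def eulerChar {V : Type*} [DecidableEq V] (D : Finset (Finset V)) : ℤ :=
  ∑ σ ∈ D, (-1 : ℤ) ^ (σ.card - 1)

lemma List.sum_map_ite_eq_countP_mul {α : Type*} (L : List α) (P : α → Prop) [DecidablePred P]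
    (c : ℤ) : (L.map fun a => if P a then c else 0).sum = (L.countP fun a => decide (P a)) * c := by
  induction L with
  | nil => simp
  | cons a L ih => by_cases h : P a <;> simp [h, ih]; ring

section

variable {V : Type*} [DecidableEq V]

def eulerWeight (D : Finset (Finset V)) (σ : Finset V) : ℤ :=
  if σ ∈ D then (-1) ^ (σ.card - 1) else 0

lemma eulerChar_eq_sum_eulerWeight {C D : Finset (Finset V)} (hDC : D ⊆ C) :
    eulerChar D = ∑ σ ∈ C, eulerWeight D σ := by
  simp only [eulerChar, eulerWeight]
  rw [← Finset.sum_filter, Finset.filter_mem_eq_inter, Finset.inter_eq_right.2 hDC]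

namespace IsComplex

lemma sdiff_pair {C : Finset (Finset V)} {a b : Finset V} (hC : IsComplex C) (hab : a ⊂ b)
    (hfree : ∀ ρ ∈ C, a ⊂ ρ → ρ = b) : IsComplex (C \ {a, b}) := by
  intro σ hσ
  obtain ⟨hσC, hσab⟩ := Finset.mem_sdiff.1 hσ
  simp only [Finset.mem_insert, Finset.mem_singleton, not_or] at hσab
  refine ⟨(hC σ hσC).1, fun τ hτσ hτ => Finset.mem_sdiff.2 ⟨(hC σ hσC).2 τ hτσ hτ, ?_⟩⟩
  simp only [Finset.mem_insert, Finset.mem_singleton]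
  rintro (rfl | rfl)
  · exact hσab.2 (hfree σ hσC (Finset.ssubset_iff_subset_ne.2 ⟨hτσ, Ne.symm hσab.1⟩))
  · exact hσab.2 (hfree σ hσC (hab.trans_subset hτσ))

lemma eulerWeight_add_eulerWeight_insert {D : Finset (Finset V)} {σ : Finset V} {x : V}
    (hD : IsComplex D) (hσ : σ.Nonempty) (hx : x ∉ σ) :
    eulerWeight D σ + eulerWeight D (insert x σ) =
      if σ ∈ D ∧ insert x σ ∉ D then (-1) ^ (σ.card - 1) else 0 := by
  have hdown : insert x σ ∈ D → σ ∈ D := fun h =>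
    (hD _ h).2 σ (Finset.subset_insert x σ) hσ
  have hsign : (-1 : ℤ) ^ ((insert x σ).card - 1) = -(-1) ^ (σ.card - 1) := by
    obtain ⟨n, hn⟩ := Nat.exists_eq_add_one.2 hσ.card_pos
    rw [Finset.card_insert_of_notMem hx, hn, Nat.add_sub_cancel, Nat.add_sub_cancel, pow_succ,
      mul_neg_one]
  unfold eulerWeight
  by_cases h₁ : σ ∈ D <;> by_cases h₂ : insert x σ ∈ D <;> simp_all

end IsComplex

namespace IsCollapseSeq

lemma sum_eq {M : Type*} [AddCommMonoid M] (f : Finset V → M) :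
    ∀ {C C' : Finset (Finset V)} {L : List (Finset V × Finset V)}, IsCollapseSeq C L C' →
      ∑ σ ∈ C, f σ = ∑ σ ∈ C', f σ + (L.map fun p => f p.1 + f p.2).sum
  | C, C', [], h => by rw [show C = C' from h]; simp
  | C, C', p :: L, ⟨h₁, h₂, hss, _, _, h⟩ => by
    have hpair : {p.1, p.2} ⊆ C := Finset.insert_subset h₁ (Finset.singleton_subset_iff.2 h₂)
    rw [← Finset.sum_sdiff hpair, sum_eq f h, Finset.sum_pair hss.ne, List.map_cons,
      List.sum_cons]
    abel

lemma exists_insert_eq :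
    ∀ {C C' : Finset (Finset V)} {L : List (Finset V × Finset V)}, IsComplex C →
      IsCollapseSeq C L C' → ∀ p ∈ L, p.1.Nonempty ∧ ∃ x ∉ p.1, insert x p.1 = p.2
  | _, _, [], _, _ => by simp
  | C, _, q :: L, hC, ⟨_, hq₂, hss, hne, hfree, h⟩ => by
    intro p hp
    rcases List.mem_cons.1 hp with rfl | hp
    · obtain ⟨x, hx₂, hx₁⟩ := Finset.exists_of_ssubset hss
      have hxC : insert x p.1 ∈ C :=
        (hC _ hq₂).2 _ (Finset.insert_subset hx₂ hss.subset) (Finset.insert_nonempty _ _)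
      exact ⟨hne, x, hx₁, hfree _ hxC (Finset.ssubset_insert hx₁)⟩
    · exact exists_insert_eq (hC.sdiff_pair hss hfree) h p hp

theorem eulerChar_sub_one {C D : Finset (Finset V)} {L : List (Finset V × Finset V)} {w : V}
    (hC : IsComplex C) (hD : IsComplex D) (hDC : D ⊆ C) (hw : {w} ∈ D)
    (h : IsCollapseSeq C L {{w}}) :
    eulerChar D - 1 =
      (L.map fun p => if p.1 ∈ D ∧ p.2 ∉ D then (-1) ^ (p.1.card - 1) else 0).sum := by
  have hpairs : ∀ p ∈ L, eulerWeight D p.1 + eulerWeight D p.2 =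
      if p.1 ∈ D ∧ p.2 ∉ D then (-1) ^ (p.1.card - 1) else 0 := by
    intro p hp
    obtain ⟨hne, x, hx, hins⟩ := h.exists_insert_eq hC p hp
    rw [← hins]
    exact hD.eulerWeight_add_eulerWeight_insert hne hx
  rw [eulerChar_eq_sum_eulerWeight hDC, h.sum_eq, ← List.map_congr_left hpairs]
  simp [eulerWeight, hw]

end IsCollapseSeq

end

theorem outwardly_matched_count_general {V : Type*} [DecidableEq V]
    (C D : Finset (Finset V)) (hC : IsComplex C) (hD : IsComplex D)
    (hDC : D ⊆ C) (j : ℕ)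
    (L : List (Finset V × Finset V)) (w : V) (hw : ({w} : Finset V) ∈ D)
    (hseq : IsCollapseSeq C L {({w} : Finset V)})
    (houtj : ∀ p ∈ L, p.1 ∈ D → p.2 ∉ D → p.1.card = j + 1) :
    ((L.countP fun p => decide (p.1 ∈ D ∧ p.2 ∉ D)) : ℤ) = (-1) ^ j * (eulerChar D - 1) := by
  have hout : ∀ p ∈ L, (if p.1 ∈ D ∧ p.2 ∉ D then (-1 : ℤ) ^ (p.1.card - 1) else 0) =
      if p.1 ∈ D ∧ p.2 ∉ D then (-1) ^ j else 0 := by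
    intro p hp
    split_ifs with h
    · rw [houtj p hp h.1 h.2, Nat.add_sub_cancel]
    · rfl
  rw [hseq.eulerChar_sub_one hC hD hDC hw, List.map_congr_left hout,
    List.sum_map_ite_eq_countP_mul, mul_left_comm, ← mul_pow, neg_one_mul, neg_neg, one_pow,
    mul_one]

/-- **Counting outwardly matched faces.** Let `(C, D)` be an out-`j` collapsible pair with `D`
nonempty: `L` is a collapsing sequence of `C` onto a vertex `w` of `D` in which every outwardly
matched face of `D` (a face of `D` matched with a face not in `D`) has dimension exactly `j`.
Then the number of outwardly matched `j`-faces equals `(−1)^j (χ(D) − 1)`; in particular it is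
independent of the out-`j` collapsing sequence chosen. -/
theorem outwardly_matched_count {V : Type*} [DecidableEq V]
    (C D : Finset (Finset V)) (hC : IsComplex C) (hD : IsComplex D)
    (hDC : D ⊆ C) (hDne : D.Nonempty) (j : ℕ)
    (L : List (Finset V × Finset V)) (w : V) (hw : ({w} : Finset V) ∈ D)
    (hseq : IsCollapseSeq C L {({w} : Finset V)})
    (houtj : ∀ p ∈ L, p.1 ∈ D → p.2 ∉ D → p.1.card = j + 1) :
    ((L.countP fun p => decide (p.1 ∈ D ∧ p.2 ∉ D)) : ℤ) = (-1) ^ j * (eulerChar D - 1) :=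
  outwardly_matched_count_general C D hC hD hDC j L w hw hseq houtj
end

section
/- Let s be the union of three geodesic segments [a,b], [b,c], [a,c] between three points a, b, c in the 2-sphere S², and let B be a connected component of S² ∖ s. Then the three interior angles of s measured with respect to B are either all ≤ π or all ≥ π; and if a, b, c do not lie on a common great circle, these inequalities are strict. -/
open scoped RealInnerProductSpace

noncomputable section

/-- The unit 2-sphere in `ℝ³`. -/
def S2 : Set (EuclideanSpace ℝ (Fin 3)) := Metric.sphere 0 1

/-- Intrinsic (angular) distance between points of the unit sphere. -/
def sdist (x y : EuclideanSpace ℝ (Fin 3)) : ℝ := Real.arccos ⟪x, y⟫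

/-- The geodesic segment (minor great-circle arc) between two non-antipodal points of the unit
sphere: the set of points of the sphere lying metrically between them. -/
def sphSeg (x y : EuclideanSpace ℝ (Fin 3)) : Set (EuclideanSpace ℝ (Fin 3)) :=
  {p ∈ S2 | sdist x p + sdist p y = sdist x y}

/-- The unit tangent direction at `a` pointing towards `x` (for `a` on the unit sphere). -/
def tangentDir (a x : EuclideanSpace ℝ (Fin 3)) : EuclideanSpace ℝ (Fin 3) :=
  ‖x - ⟪a, x⟫ • a‖⁻¹ • (x - ⟪a, x⟫ • a)

/-- The (standard, `≤ π`) spherical angle at `a` between the segments `[a,b]` and `[a,c]`. -/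
def sphAngle (a b c : EuclideanSpace ℝ (Fin 3)) : ℝ :=
  InnerProductGeometry.angle (tangentDir a b) (tangentDir a c)

/-- The unit tangent direction at `a` bisecting the angle between `[a,b]` and `[a,c]`. -/
def bisectDir (a b c : EuclideanSpace ℝ (Fin 3)) : EuclideanSpace ℝ (Fin 3) :=
  ‖tangentDir a b + tangentDir a c‖⁻¹ • (tangentDir a b + tangentDir a c)

/-- `B` occupies the inner angular sector at `a` between the segments `[a,b]` and `[a,c]`:
points on the geodesic issuing from `a` in the bisecting direction, arbitrarily close to `a`,
belong to `B`. -/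
def InnerSide (B : Set (EuclideanSpace ℝ (Fin 3))) (a b c : EuclideanSpace ℝ (Fin 3)) : Prop :=
  ∀ δ > 0, ∃ t ∈ Set.Ioo (0 : ℝ) δ, Real.cos t • a + Real.sin t • bisectDir a b c ∈ B

open Classical in
/-- The angle at the vertex `a` between the segments `[a,b]` and `[a,c]`, measured with respect
to the region `B`: it equals the standard angle if `B` lies on the inner side at `a`, and the
reflex angle otherwise. -/
def angleWRT (B : Set (EuclideanSpace ℝ (Fin 3))) (a b c : EuclideanSpace ℝ (Fin 3)) : ℝ :=
  if InnerSide B a b c then sphAngle a b c else 2 * Real.pi - sphAngle a b c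

/-!
If `a, b, c` are linearly independent, the open spherical triangle `sphTriangle a b c` (the radial
projection of the open cone spanned by `a, b, c`) is connected and misses `s`, and at each vertex
the geodesic along the bisector of the two sides enters it at once. So `B` is on the inner side at
a vertex iff `B` contains this triangle, a condition that does not depend on the vertex: either all
three angles are the standard ones, `< π`, or all three are reflex, `> π`.

If `a, b, c` lie on a great circle, the two sides leave each vertex in equal or opposite
directions. The bisecting geodesic then runs along a side, or, the bisector direction being the
junk value `normalize 0 = 0`, leaves the sphere; either way `B` is on the inner side at no vertex
and every angle is reflex.
-/

open Real NormedSpace InnerProductGeometry Filter Topology Set Submodule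

local notation "E3" => EuclideanSpace ℝ (Fin 3)

section LinearAlgebra

variable {V : Type*} [AddCommGroup V] [Module ℝ V] {a b c : V}

theorem LinearIndependent.eq_zero_of_triple (h : LinearIndependent ℝ ![a, b, c])
    {r s t : ℝ} (hrst : r • a + s • b + t • c = 0) : r = 0 ∧ s = 0 ∧ t = 0 := by
  have := Fintype.linearIndependent_iff.1 h ![r, s, t] (by simpa [Fin.sum_univ_three] using hrst)
  exact ⟨this 0, this 1, this 2⟩

theorem LinearIndependent.smul_add_smul_add_smul_ne_zero (h : LinearIndependent ℝ ![a, b, c])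
    {α β γ : ℝ} (hγ : γ ≠ 0) : α • a + β • b + γ • c ≠ 0 :=
  fun h0 => hγ (h.eq_zero_of_triple h0).2.2

theorem linearIndependent_vec3_rotate :
    LinearIndependent ℝ ![b, c, a] ↔ LinearIndependent ℝ ![a, b, c] :=
  linearIndependent_equiv' (finRotate 3) (by ext i; fin_cases i <;> rfl)

theorem linearIndependent_vec3_iff :
    LinearIndependent ℝ ![a, b, c] ↔ LinearIndependent ℝ ![a, b] ∧ c ∉ span ℝ {a, b} := by
  rw [← linearIndependent_vec3_rotate, ← linearIndependent_vec3_rotate,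
    ← Matrix.range_cons_cons_empty a b ![]]
  exact linearIndependent_finCons

theorem mem_span_pair_of_not_linearIndependent (hab : LinearIndependent ℝ ![a, b])
    (h : ¬ LinearIndependent ℝ ![a, b, c]) : c ∈ span ℝ {a, b} :=
  by_contra fun hc => h (linearIndependent_vec3_iff.2 ⟨hab, hc⟩)

theorem coplanar_of_mem_span_pair (hc : c ∈ span ℝ {a, b}) : Coplanar ℝ ({0, a, b, c} : Set V) := by
  have hrot : ({0, a, b, c} : Set V) = insert c {0, a, b} := by
    simp only [Set.insert_comm _ c, Set.pair_comm _ c]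
  rw [hrot, coplanar_insert_iff_of_mem_affineSpan]
  · exact coplanar_triple ℝ 0 a b
  · rwa [← SetLike.mem_coe, affineSpan_insert_zero]

end LinearAlgebra

section InnerProductSpace

variable {V : Type*} [NormedAddCommGroup V] [InnerProductSpace ℝ V] {a b c w x y : V}

theorem linearIndependent_pair_of_norm_eq_one (hx : ‖x‖ = 1) (hy : ‖y‖ = 1)
    (hxy : x ≠ y) (hxy' : x ≠ -y) : LinearIndependent ℝ ![x, y] := by
  refine (LinearIndependent.pair_iff' (norm_ne_zero_iff.1 (by simp [hx]))).2 fun r hr => ?_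
  have hr1 : |r| = 1 := by simpa [← hr, norm_smul, hx] using hy
  rcases abs_eq (zero_le_one' ℝ) |>.1 hr1 with rfl | rfl
  · exact hxy (by simpa using hr)
  · exact hxy' (by simp [← hr])

theorem sub_inner_smul_ne_zero (h : LinearIndependent ℝ ![a, x]) :
    x - ⟪a, x⟫ • a ≠ 0 := fun h0 =>
  one_ne_zero (h.eq_zero_of_pair (s := -⟪a, x⟫) (t := 1) (by rw [← h0]; module)).2

theorem inner_cos_smul_add_sin_smul (ha : ‖a‖ = 1) (hw : ‖w‖ = 1) (haw : ⟪a, w⟫ = 0)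
    (s t : ℝ) :
    ⟪cos s • a + sin s • w, cos t • a + sin t • w⟫ = cos (s - t) := by
  simp only [inner_add_left, inner_add_right, real_inner_smul_left, real_inner_smul_right,
    real_inner_self_eq_norm_sq, ha, hw, haw, real_inner_comm a w, Real.cos_sub]
  ring

theorem norm_cos_smul_add_sin_smul (ha : ‖a‖ = 1) (hw : ‖w‖ = 1) (haw : ⟪a, w⟫ = 0)
    (t : ℝ) : ‖cos t • a + sin t • w‖ = 1 := by
  have := inner_cos_smul_add_sin_smul ha hw haw t t
  rw [sub_self, Real.cos_zero, real_inner_self_eq_norm_sq] at this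
  exact (pow_eq_one_iff_of_nonneg (norm_nonneg _) two_ne_zero).1 this

def sphTriangle (a b c : V) : Set V :=
  (fun p : ℝ × ℝ × ℝ => normalize (p.1 • a + p.2.1 • b + p.2.2 • c)) '' Ioi 0 ×ˢ Ioi 0 ×ˢ Ioi 0

theorem mem_sphTriangle : x ∈ sphTriangle a b c ↔
    ∃ α β γ : ℝ, 0 < α ∧ 0 < β ∧ 0 < γ ∧ normalize (α • a + β • b + γ • c) = x := by
  simp [sphTriangle, and_assoc]

theorem sphTriangle_swap (a b c : V) : sphTriangle b a c = sphTriangle a b c := by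
  ext x
  simp only [mem_sphTriangle]
  constructor <;>
    exact fun ⟨α, β, γ, hα, hβ, hγ, hx⟩ => ⟨β, α, γ, hβ, hα, hγ, by rw [← hx, add_comm (β • _)]⟩

theorem sphTriangle_rotate (a b c : V) : sphTriangle b c a = sphTriangle a b c := by
  ext x
  simp only [mem_sphTriangle]
  constructor
  · exact fun ⟨α, β, γ, hα, hβ, hγ, hx⟩ => ⟨γ, α, β, hγ, hα, hβ, by rw [← hx]; congr 1; abel⟩
  · exact fun ⟨α, β, γ, hα, hβ, hγ, hx⟩ => ⟨β, γ, α, hβ, hγ, hα, by rw [← hx]; congr 1; abel⟩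

theorem isPreconnected_sphTriangle (h : LinearIndependent ℝ ![a, b, c]) :
    IsPreconnected (sphTriangle a b c) := by
  have hg : Continuous fun p : ℝ × ℝ × ℝ => p.1 • a + p.2.1 • b + p.2.2 • c := by fun_prop
  refine (isPreconnected_Ioi.prod (isPreconnected_Ioi.prod isPreconnected_Ioi)).image _ ?_
  exact ((continuous_norm.comp hg).continuousOn.inv₀ fun p hp =>
    norm_ne_zero_iff.2 (h.smul_add_smul_add_smul_ne_zero hp.2.2.ne')).smul hg.continuousOn

theorem norm_eq_one_of_mem_sphTriangle (h : LinearIndependent ℝ ![a, b, c])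
    (hx : x ∈ sphTriangle a b c) : ‖x‖ = 1 := by
  obtain ⟨α, β, γ, -, -, hγ, rfl⟩ := mem_sphTriangle.1 hx
  exact norm_normalize_eq_one_iff.2 (h.smul_add_smul_add_smul_ne_zero hγ.ne')

theorem pos_of_mem_sphTriangle (h : LinearIndependent ℝ ![a, b, c]) (hx : x ∈ sphTriangle a b c)
    {k l m : ℝ} (hklm : x = k • a + l • b + m • c) : 0 < k ∧ 0 < l ∧ 0 < m := by
  obtain ⟨α, β, γ, hα, hβ, hγ, rfl⟩ := mem_sphTriangle.1 hx
  set r := ‖α • a + β • b + γ • c‖⁻¹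
  have hr : 0 < r := inv_pos.2 (norm_pos_iff.2 (h.smul_add_smul_add_smul_ne_zero hγ.ne'))
  obtain ⟨hk, hl, hm⟩ := h.eq_zero_of_triple (r := r * α - k) (s := r * β - l) (t := r * γ - m)
    (by rw [NormedSpace.normalize] at hklm; linear_combination (norm := module) hklm)
  refine ⟨?_, ?_, ?_⟩ <;> nlinarith

theorem eventually_cos_smul_add_sin_smul_mem_sphTriangle (ha : ‖a‖ = 1) (hw : ‖w‖ = 1)
    (haw : ⟪a, w⟫ = 0) {ν l m : ℝ} (hl : 0 < l) (hm : 0 < m) (hw' : w = ν • a + l • b + m • c) :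
    ∀ᶠ t in 𝓝[>] 0, cos t • a + sin t • w ∈ sphTriangle a b c := by
  have hcos : ∀ᶠ t in 𝓝[>] (0 : ℝ), 0 < cos t + ν * sin t :=
    nhdsWithin_le_nhds <| (Continuous.tendsto (by fun_prop) 0).eventually
      (lt_mem_nhds (by simp : (0 : ℝ) < cos 0 + ν * sin 0))
  filter_upwards [hcos, Ioo_mem_nhdsGT pi_pos] with t hcos ht
  have hsin := sin_pos_of_pos_of_lt_pi ht.1 ht.2
  refine mem_sphTriangle.2 ⟨_, _, _, hcos, mul_pos hsin hl, mul_pos hsin hm, ?_⟩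
  conv_rhs => rw [← normalize_eq_self_of_norm_eq_one (norm_cos_smul_add_sin_smul ha hw haw t)]
  rw [hw']
  congr 1
  module

end InnerProductSpace

section Sphere

variable {a b c x y : E3} {B : Set E3}

theorem mem_S2_iff_norm : x ∈ S2 ↔ ‖x‖ = 1 := mem_sphere_zero_iff_norm

theorem sdist_eq_angle (hx : x ∈ S2) (hy : y ∈ S2) : sdist x y = angle x y := by
  rw [sdist, angle, mem_S2_iff_norm.1 hx, mem_S2_iff_norm.1 hy, mul_one, div_one]

theorem sdist_comm (x y : E3) : sdist x y = sdist y x := by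
  rw [sdist, sdist, real_inner_comm]

theorem sphSeg_comm (x y : E3) : sphSeg x y = sphSeg y x := by
  ext p
  simp only [sphSeg, mem_ofPred_eq]
  rw [sdist_comm x p, sdist_comm p y, sdist_comm x y, add_comm]

theorem sphSeg_subset_span (hx : x ∈ S2) (hy : y ∈ S2) (hxy : x ≠ -y) :
    sphSeg x y ⊆ span ℝ {x, y} := by
  rintro q ⟨hq, hsum⟩
  rw [sdist_eq_angle hx hq, sdist_eq_angle hq hy, sdist_eq_angle hx hy] at hsum
  have hq0 : q ≠ 0 := by rintro rfl; simp [S2] at hq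
  rcases (angle_eq_angle_add_angle_iff hq0).1 hsum.symm with hπ | hspan
  · rw [mem_S2_iff_norm] at hx hy
    rw [← inner_eq_neg_mul_norm_iff_angle_eq_pi (by simp [← norm_ne_zero_iff, hx])
      (by simp [← norm_ne_zero_iff, hy]), hx, hy, mul_one,
      inner_eq_neg_one_iff_of_norm_eq_one hx hy] at hπ
    exact absurd hπ hxy
  · exact span_le_restrictScalars NNReal ℝ _ hspan

theorem sdist_pos (hx : x ∈ S2) (hy : y ∈ S2) (hxy : x ≠ y) : 0 < sdist x y := by
  rw [mem_S2_iff_norm] at hx hy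
  refine arccos_pos.2 <| ((real_inner_le_norm x y).trans_eq (by rw [hx, hy, one_mul])).lt_of_ne ?_
  rwa [Ne, inner_eq_one_iff_of_norm_eq_one hx hy]

theorem cos_smul_add_sin_smul_mem_sphSeg {w : E3} (ha : a ∈ S2) (hw : ‖w‖ = 1)
    (haw : ⟪a, w⟫ = 0) {t θ : ℝ} (ht : t ∈ Icc 0 θ) (hθ : θ ≤ π) :
    cos t • a + sin t • w ∈ sphSeg a (cos θ • a + sin θ • w) := by
  rw [mem_S2_iff_norm] at ha
  have hinner := inner_cos_smul_add_sin_smul ha hw haw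
  have hinner_a (t : ℝ) : ⟪a, cos t • a + sin t • w⟫ = cos t := by simpa using hinner 0 t
  refine ⟨mem_S2_iff_norm.2 (norm_cos_smul_add_sin_smul ha hw haw t), ?_⟩
  rw [sdist, sdist, sdist, hinner_a, hinner_a, hinner, ← Real.cos_neg (t - θ), neg_sub,
    Real.arccos_cos ht.1 (ht.2.trans hθ),
    Real.arccos_cos (sub_nonneg.2 ht.2) (by linarith [ht.1]),
    Real.arccos_cos (ht.1.trans ht.2) hθ]
  ring

theorem sphTriangle_subset_compl (ha : a ∈ S2) (hb : b ∈ S2) (hc : c ∈ S2) (hab : a ≠ -b)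
    (hbc : b ≠ -c) (hac : a ≠ -c) (h : LinearIndependent ℝ ![a, b, c]) :
    sphTriangle a b c ⊆ S2 \ (sphSeg a b ∪ sphSeg b c ∪ sphSeg a c) := by
  intro x hx
  refine ⟨mem_S2_iff_norm.2 (norm_eq_one_of_mem_sphTriangle h hx), ?_⟩
  rintro ((hs | hs) | hs)
  · obtain ⟨k, l, rfl⟩ := mem_span_pair.1 (sphSeg_subset_span ha hb hab hs)
    exact (pos_of_mem_sphTriangle h hx (k := k) (l := l) (m := 0) (by simp)).2.2.false
  · obtain ⟨k, l, rfl⟩ := mem_span_pair.1 (sphSeg_subset_span hb hc hbc hs)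
    exact (pos_of_mem_sphTriangle h hx (k := 0) (l := k) (m := l) (by simp)).1.false
  · obtain ⟨k, l, rfl⟩ := mem_span_pair.1 (sphSeg_subset_span ha hc hac hs)
    exact (pos_of_mem_sphTriangle h hx (k := k) (l := 0) (m := l) (by simp)).2.1.false

theorem tangentDir_eq_normalize (a x : E3) : tangentDir a x = normalize (x - ⟪a, x⟫ • a) := rfl

theorem norm_tangentDir (h : LinearIndependent ℝ ![a, x]) : ‖tangentDir a x‖ = 1 :=
  norm_normalize_eq_one_iff.2 (sub_inner_smul_ne_zero h)

theorem inner_tangentDir (ha : a ∈ S2) (x : E3) : ⟪a, tangentDir a x⟫ = 0 := by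
  rw [tangentDir, real_inner_smul_right, inner_sub_right, real_inner_smul_right,
    real_inner_self_eq_norm_sq, mem_S2_iff_norm.1 ha]
  ring

theorem eq_cos_smul_add_sin_smul_tangentDir (ha : a ∈ S2) (hb : b ∈ S2) :
    b = cos (sdist a b) • a + sin (sdist a b) • tangentDir a b := by
  rw [mem_S2_iff_norm] at ha hb
  have hbound := abs_le.1 (by simpa [ha, hb] using abs_real_inner_le_norm a b)
  have hsin : sin (sdist a b) = ‖b - ⟪a, b⟫ • a‖ := by
    rw [sdist, sin_arccos, ← sqrt_sq (norm_nonneg _), norm_sub_sq_real, norm_smul,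
      real_inner_smul_right, real_inner_comm, Real.norm_eq_abs, mul_pow, sq_abs, ha, hb]
    ring_nf
  rw [hsin, tangentDir_eq_normalize, norm_smul_normalize, sdist, cos_arccos hbound.1 hbound.2]
  module

theorem mem_span_pair_of_tangentDir_eq_smul {r : ℝ} (h : tangentDir a c = r • tangentDir a b) :
    c ∈ span ℝ {a, b} := by
  have hc : c = ⟪a, c⟫ • a + ‖c - ⟪a, c⟫ • a‖ • tangentDir a c := by
    rw [tangentDir_eq_normalize, norm_smul_normalize]
    module
  have hb : tangentDir a b ∈ span ℝ {a, b} :=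
    smul_mem _ _ (sub_mem (subset_span (by simp)) (smul_mem _ _ (subset_span (by simp))))
  rw [hc, h, smul_smul]
  exact add_mem (smul_mem _ _ (subset_span (by simp))) (smul_mem _ _ hb)

theorem tangentDir_eq_or_eq_neg_of_mem_span_pair (ha : a ∈ S2)
    (hac : LinearIndependent ℝ ![a, c]) (hc : c ∈ span ℝ {a, b}) :
    tangentDir a c = tangentDir a b ∨ tangentDir a c = -tangentDir a b := by
  obtain ⟨α, β, rfl⟩ := mem_span_pair.1 hc
  have hu : α • a + β • b - ⟪a, α • a + β • b⟫ • a = β • (b - ⟪a, b⟫ • a) := by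
    simp only [inner_add_right, real_inner_smul_right, real_inner_self_eq_norm_sq,
      mem_S2_iff_norm.1 ha]
    module
  have hβ : β ≠ 0 := by
    rintro rfl
    exact sub_inner_smul_ne_zero hac (by rw [hu, zero_smul])
  rw [tangentDir_eq_normalize, hu]
  rcases hβ.lt_or_gt with hβ | hβ
  · exact .inr (normalize_smul_of_neg hβ _)
  · exact .inl (normalize_smul_of_pos hβ _)

theorem tangentDir_add_ne_zero (hc : c ∉ span ℝ {a, b}) : tangentDir a b + tangentDir a c ≠ 0 :=
  fun h => hc <| mem_span_pair_of_tangentDir_eq_smul (r := -1) <| by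
    rw [neg_one_smul]; exact eq_neg_of_add_eq_zero_right h

theorem sphAngle_lt_pi (hc : c ∉ span ℝ {a, b}) : sphAngle a b c < π := by
  refine (angle_le_pi _ _).lt_of_ne fun h => ?_
  obtain ⟨-, r, -, hr⟩ := angle_eq_pi_iff.1 h
  exact hc (mem_span_pair_of_tangentDir_eq_smul hr)

theorem bisectDir_eq_normalize (a b c : E3) :
    bisectDir a b c = normalize (tangentDir a b + tangentDir a c) := rfl

theorem norm_bisectDir (hc : c ∉ span ℝ {a, b}) : ‖bisectDir a b c‖ = 1 :=
  norm_normalize_eq_one_iff.2 (tangentDir_add_ne_zero hc)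

theorem inner_bisectDir (ha : a ∈ S2) : ⟪a, bisectDir a b c⟫ = 0 := by
  rw [bisectDir, real_inner_smul_right, inner_add_right, inner_tangentDir ha,
    inner_tangentDir ha, add_zero, mul_zero]

theorem exists_bisectDir_eq (hab : LinearIndependent ℝ ![a, b]) (hac : LinearIndependent ℝ ![a, c])
    (hc : c ∉ span ℝ {a, b}) :
    ∃ ν l m : ℝ, 0 < l ∧ 0 < m ∧ bisectDir a b c = ν • a + l • b + m • c := by
  have hm := inv_pos.2 (norm_pos_iff.2 (tangentDir_add_ne_zero hc))
  have hnb := inv_pos.2 (norm_pos_iff.2 (sub_inner_smul_ne_zero hab))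
  have hnc := inv_pos.2 (norm_pos_iff.2 (sub_inner_smul_ne_zero hac))
  refine ⟨-(‖tangentDir a b + tangentDir a c‖⁻¹ *
    (‖b - ⟪a, b⟫ • a‖⁻¹ * ⟪a, b⟫ + ‖c - ⟪a, c⟫ • a‖⁻¹ * ⟪a, c⟫)), _, _, mul_pos hm hnb,
    mul_pos hm hnc, ?_⟩
  rw [bisectDir, tangentDir, tangentDir]
  module

theorem innerSide_iff_frequently : InnerSide B a b c ↔
    ∃ᶠ t in 𝓝[>] 0, cos t • a + sin t • bisectDir a b c ∈ B :=
  ((nhdsGT_basis 0).frequently_iff).symm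

theorem innerSide_connectedComponentIn_iff {U F : Set E3} {x₀ : E3} (hUF : U ⊆ F)
    (hU : IsPreconnected U) (hev : ∀ᶠ t in 𝓝[>] 0, cos t • a + sin t • bisectDir a b c ∈ U) :
    InnerSide (connectedComponentIn F x₀) a b c ↔ U ⊆ connectedComponentIn F x₀ := by
  rw [innerSide_iff_frequently]
  refine ⟨fun h => ?_, fun h => (hev.mono fun t ht => h ht).frequently⟩
  obtain ⟨t, htB, htU⟩ := (h.and_eventually hev).exists
  rw [connectedComponentIn_eq htB]
  exact hU.subset_connectedComponentIn htU hUF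

theorem innerSide_iff_sphTriangle_subset {F : Set E3} {x₀ : E3} (ha : a ∈ S2)
    (hab : LinearIndependent ℝ ![a, b]) (hac : LinearIndependent ℝ ![a, c])
    (hc : c ∉ span ℝ {a, b}) (hF : sphTriangle a b c ⊆ F)
    (hU : IsPreconnected (sphTriangle a b c)) :
    InnerSide (connectedComponentIn F x₀) a b c ↔ sphTriangle a b c ⊆ connectedComponentIn F x₀ :=
  have ⟨_, _, _, hl, hm, hw⟩ := exists_bisectDir_eq hab hac hc
  innerSide_connectedComponentIn_iff hF hU <| eventually_cos_smul_add_sin_smul_mem_sphTriangle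
    (mem_S2_iff_norm.1 ha) (norm_bisectDir hc) (inner_bisectDir ha) hl hm hw

theorem not_innerSide_of_mem_span_pair (ha : a ∈ S2) (hb : b ∈ S2)
    (hab : LinearIndependent ℝ ![a, b]) (hac : LinearIndependent ℝ ![a, c])
    (hc : c ∈ span ℝ {a, b}) (hB : B ⊆ S2 \ sphSeg a b) : ¬ InnerSide B a b c := by
  rw [innerSide_iff_frequently, not_frequently]
  rcases tangentDir_eq_or_eq_neg_of_mem_span_pair ha hac hc with h | h
  · have hbis : bisectDir a b c = tangentDir a b := by
      rw [bisectDir_eq_normalize, h, ← two_smul ℝ, normalize_smul_of_pos two_pos,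
        tangentDir_eq_normalize, normalize_normalize]
    have hθ := sdist_pos ha hb (hab.injective.ne (zero_ne_one (α := Fin 2)))
    filter_upwards [Ioo_mem_nhdsGT hθ] with t ht htB
    have hseg := cos_smul_add_sin_smul_mem_sphSeg ha (norm_tangentDir hab) (inner_tangentDir ha b)
      (θ := sdist a b) ⟨ht.1.le, ht.2.le⟩ (arccos_le_pi _)
    rw [← eq_cos_smul_add_sin_smul_tangentDir ha hb, ← hbis] at hseg
    exact (hB htB).2 hseg
  · have hbis : bisectDir a b c = 0 := by
      rw [bisectDir_eq_normalize, h, add_neg_cancel, normalize_zero_eq_zero]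
    filter_upwards [Ioo_mem_nhdsGT pi_pos] with t ht htB
    have hS := mem_S2_iff_norm.1 (hB htB).1
    rw [hbis, smul_zero, add_zero, norm_smul, mem_S2_iff_norm.1 ha, mul_one, Real.norm_eq_abs]
      at hS
    nlinarith [sin_sq_add_cos_sq t, sq_abs (cos t), sin_pos_of_pos_of_lt_pi ht.1 ht.2]

theorem angleWRT_lt_pi_iff (h : sphAngle a b c < π) : angleWRT B a b c < π ↔ InnerSide B a b c := by
  unfold angleWRT
  split_ifs with hB <;> simp only [hB, h, iff_false, not_lt]
  linarith

theorem pi_lt_angleWRT_iff (h : sphAngle a b c < π) :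
    π < angleWRT B a b c ↔ ¬ InnerSide B a b c := by
  unfold angleWRT
  split_ifs with hB <;> simp only [hB, not_true, not_false_eq_true, iff_true, iff_false, not_lt]
  · exact h.le
  · linarith

theorem pi_le_angleWRT (h : ¬ InnerSide B a b c) : π ≤ angleWRT B a b c := by
  have : sphAngle a b c ≤ π := angle_le_pi _ _
  rw [angleWRT, if_neg h]
  linarith

theorem angleWRT_lt_pi_or_pi_lt {F : Set E3} {x₀ : E3} (ha : a ∈ S2) (hb : b ∈ S2) (hc : c ∈ S2)
    (hli : LinearIndependent ℝ ![a, b, c]) (hF : sphTriangle a b c ⊆ F)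
    (hB : B = connectedComponentIn F x₀) :
    (angleWRT B a b c < π ∧ angleWRT B b a c < π ∧ angleWRT B c a b < π) ∨
      (π < angleWRT B a b c ∧ π < angleWRT B b a c ∧ π < angleWRT B c a b) := by
  subst hB
  obtain ⟨hab, hc_ab⟩ := linearIndependent_vec3_iff.1 hli
  obtain ⟨hbc, ha_bc⟩ := linearIndependent_vec3_iff.1 (linearIndependent_vec3_rotate.2 hli)
  obtain ⟨hca, hb_ca⟩ := linearIndependent_vec3_iff.1 (linearIndependent_vec3_rotate.1 hli)
  have hc_ba : c ∉ span ℝ {b, a} := by rwa [Set.pair_comm]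
  have hU := isPreconnected_sphTriangle hli
  have h₁ := innerSide_iff_sphTriangle_subset (F := F) (x₀ := x₀) ha hab
    (LinearIndependent.pair_symm_iff.1 hca) hc_ab hF hU
  have h₂ := innerSide_iff_sphTriangle_subset (F := F) (x₀ := x₀) hb
    (LinearIndependent.pair_symm_iff.1 hab) hbc hc_ba
    (by rwa [sphTriangle_swap]) (by rwa [sphTriangle_swap])
  have h₃ := innerSide_iff_sphTriangle_subset (F := F) (x₀ := x₀) hc hca
    (LinearIndependent.pair_symm_iff.1 hbc) hb_ca
    (by rwa [← sphTriangle_rotate]) (by rwa [← sphTriangle_rotate])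
  rw [sphTriangle_swap] at h₂
  rw [← sphTriangle_rotate] at h₃
  by_cases hP : sphTriangle a b c ⊆ connectedComponentIn F x₀
  · exact .inl ⟨(angleWRT_lt_pi_iff (sphAngle_lt_pi hc_ab)).2 (h₁.2 hP),
      (angleWRT_lt_pi_iff (sphAngle_lt_pi hc_ba)).2 (h₂.2 hP),
      (angleWRT_lt_pi_iff (sphAngle_lt_pi hb_ca)).2 (h₃.2 hP)⟩
  · exact .inr ⟨(pi_lt_angleWRT_iff (sphAngle_lt_pi hc_ab)).2 (mt h₁.1 hP),
      (pi_lt_angleWRT_iff (sphAngle_lt_pi hc_ba)).2 (mt h₂.1 hP),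
      (pi_lt_angleWRT_iff (sphAngle_lt_pi hb_ca)).2 (mt h₃.1 hP)⟩

theorem pi_le_angleWRT_of_not_linearIndependent (ha : a ∈ S2) (hb : b ∈ S2) (hc : c ∈ S2)
    (hab : LinearIndependent ℝ ![a, b]) (hbc : LinearIndependent ℝ ![b, c])
    (hac : LinearIndependent ℝ ![a, c]) (hli : ¬ LinearIndependent ℝ ![a, b, c])
    (hB : B ⊆ S2 \ (sphSeg a b ∪ sphSeg b c ∪ sphSeg a c)) :
    π ≤ angleWRT B a b c ∧ π ≤ angleWRT B b a c ∧ π ≤ angleWRT B c a b := by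
  have hc_ab := mem_span_pair_of_not_linearIndependent hab hli
  have hb_ca := mem_span_pair_of_not_linearIndependent (LinearIndependent.pair_symm_iff.1 hac)
    fun h => hli (linearIndependent_vec3_rotate.2 h)
  refine ⟨pi_le_angleWRT (not_innerSide_of_mem_span_pair ha hb hab hac hc_ab ?_),
    pi_le_angleWRT (not_innerSide_of_mem_span_pair hb ha (LinearIndependent.pair_symm_iff.1 hab)
      hbc (by rwa [Set.pair_comm]) ?_),
    pi_le_angleWRT (not_innerSide_of_mem_span_pair hc ha (LinearIndependent.pair_symm_iff.1 hac)
      (LinearIndependent.pair_symm_iff.1 hbc) hb_ca ?_)⟩ <;>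
  refine hB.trans (sdiff_subset_sdiff_right ?_)
  · exact subset_union_left.trans subset_union_left
  · rw [sphSeg_comm]; exact subset_union_left.trans subset_union_left
  · rw [sphSeg_comm]; exact subset_union_right

end Sphere

theorem triangle_angles_wrt_component_general (a b c : EuclideanSpace ℝ (Fin 3))
    (ha : a ∈ S2) (hb : b ∈ S2) (hc : c ∈ S2)
    (hab : a ≠ b) (hab' : a ≠ -b) (hbc : b ≠ c) (hbc' : b ≠ -c) (hac : a ≠ c) (hac' : a ≠ -c)
    (s B : Set (EuclideanSpace ℝ (Fin 3)))
    (hs : s = sphSeg a b ∪ sphSeg b c ∪ sphSeg a c)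
    (x₀ : EuclideanSpace ℝ (Fin 3))
    (hB : B = connectedComponentIn (S2 \ s) x₀) :
    ((angleWRT B a b c ≤ Real.pi ∧ angleWRT B b a c ≤ Real.pi ∧ angleWRT B c a b ≤ Real.pi) ∨
      (Real.pi ≤ angleWRT B a b c ∧ Real.pi ≤ angleWRT B b a c ∧
        Real.pi ≤ angleWRT B c a b)) ∧
      (¬ Coplanar ℝ ({0, a, b, c} : Set (EuclideanSpace ℝ (Fin 3))) →
        (angleWRT B a b c < Real.pi ∧ angleWRT B b a c < Real.pi ∧
            angleWRT B c a b < Real.pi) ∨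
          (Real.pi < angleWRT B a b c ∧ Real.pi < angleWRT B b a c ∧
            Real.pi < angleWRT B c a b)) := by
  subst hs
  by_cases hli : LinearIndependent ℝ ![a, b, c]
  · have h := angleWRT_lt_pi_or_pi_lt ha hb hc hli
      (sphTriangle_subset_compl ha hb hc hab' hbc' hac' hli) hB
    exact ⟨h.imp (fun h => ⟨h.1.le, h.2.1.le, h.2.2.le⟩) (fun h => ⟨h.1.le, h.2.1.le, h.2.2.le⟩),
      fun _ => h⟩
  · have ha₁ := mem_S2_iff_norm.1 ha
    have hb₁ := mem_S2_iff_norm.1 hb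
    have hc₁ := mem_S2_iff_norm.1 hc
    have hab₂ := linearIndependent_pair_of_norm_eq_one ha₁ hb₁ hab hab'
    refine ⟨.inr (pi_le_angleWRT_of_not_linearIndependent ha hb hc hab₂
      (linearIndependent_pair_of_norm_eq_one hb₁ hc₁ hbc hbc')
      (linearIndependent_pair_of_norm_eq_one ha₁ hc₁ hac hac') hli
      (hB ▸ connectedComponentIn_subset _ _)), fun hcop => ?_⟩
    exact absurd (coplanar_of_mem_span_pair (mem_span_pair_of_not_linearIndependent hab₂ hli)) hcop

/-- **Angles of a spherical triangle with respect to a complementary region.**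
Let `s` be the union of the three geodesic segments `[a,b]`, `[b,c]`, `[a,c]` joining three
points `a, b, c` of the unit sphere (pairwise distinct and non-antipodal), and let `B` be a
connected component of `S² ∖ s`.  Then the three angles of `s` measured with respect to `B`
are either all `≤ π` or all `≥ π`; and if `a, b, c` do not lie on a common great circle, these
inequalities are strict. -/
theorem triangle_angles_wrt_component (a b c : EuclideanSpace ℝ (Fin 3))
    (ha : a ∈ S2) (hb : b ∈ S2) (hc : c ∈ S2)
    (hab : a ≠ b) (hab' : a ≠ -b) (hbc : b ≠ c) (hbc' : b ≠ -c) (hac : a ≠ c) (hac' : a ≠ -c)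
    (s B : Set (EuclideanSpace ℝ (Fin 3)))
    (hs : s = sphSeg a b ∪ sphSeg b c ∪ sphSeg a c)
    (x₀ : EuclideanSpace ℝ (Fin 3)) (hx₀ : x₀ ∈ S2 \ s)
    (hB : B = connectedComponentIn (S2 \ s) x₀) :
    ((angleWRT B a b c ≤ Real.pi ∧ angleWRT B b a c ≤ Real.pi ∧ angleWRT B c a b ≤ Real.pi) ∨
      (Real.pi ≤ angleWRT B a b c ∧ Real.pi ≤ angleWRT B b a c ∧
        Real.pi ≤ angleWRT B c a b)) ∧
      (¬ Coplanar ℝ ({0, a, b, c} : Set (EuclideanSpace ℝ (Fin 3))) →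
        (angleWRT B a b c < Real.pi ∧ angleWRT B b a c < Real.pi ∧
            angleWRT B c a b < Real.pi) ∨
          (Real.pi < angleWRT B a b c ∧ Real.pi < angleWRT B b a c ∧
            Real.pi < angleWRT B c a b)) :=
  triangle_angles_wrt_component_general a b c ha hb hc hab hab' hbc hbc' hac hac' s B hs x₀ hB
end
end

section
/- Let Q₁, Q₂, Q₃ be three planar (coplanar within themselves) quadrilaterals in ℝ^d with vertex sets {a₁,a₂,a₃,a₄}, {a₁,a₄,a₅,a₆}, {a₁,a₂,a₇,a₆} respectively, such that the three quadrilaterals do not all lie in a common 2-plane. If Q₁', Q₂', Q₃' is a second such triple with a_i' = a_i for all i ∈ {2,…,7}, then a₁' = a₁. In other words, the common vertex a₁ is uniquely determined by the other six vertices. -/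
/-- A planar quadrilateral on four (labeled) vertices: the four points are coplanar and no
three of them are collinear (as holds for the vertex set of a convex polygon with four
vertices lying on a common affine `2`-plane). -/
def IsPlanarQuad {V : Type*} [AddCommGroup V] [Module ℝ V] (w x y z : V) : Prop :=
  Coplanar ℝ {w, x, y, z} ∧
    ¬ Collinear ℝ {w, x, y} ∧ ¬ Collinear ℝ {w, x, z} ∧
      ¬ Collinear ℝ {w, y, z} ∧ ¬ Collinear ℝ {x, y, z}

open Module AffineSubspace

/-- If `insert w s` is coplanar and `s` is not collinear, then `w` lies in the affine span
of `s`. -/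
lemma mem_affineSpan_of_coplanar_insert {V : Type*} [AddCommGroup V] [Module ℝ V]
    {w : V} {s : Set V} (hs : s.Nonempty)
    (hC : Coplanar ℝ (insert w s)) (hnc : ¬ Collinear ℝ s) :
    w ∈ affineSpan ℝ s := by
  have hfin : FiniteDimensional ℝ (vectorSpan ℝ (insert w s)) := hC.finiteDimensional_vectorSpan
  have hle : vectorSpan ℝ s ≤ vectorSpan ℝ (insert w s) :=
    vectorSpan_mono ℝ (Set.subset_insert w s)
  haveI : FiniteDimensional ℝ (vectorSpan ℝ s) := Submodule.finiteDimensional_of_le hle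
  have h2 : 2 ≤ finrank ℝ (vectorSpan ℝ s) := by
    by_contra h
    exact hnc (collinear_iff_finrank_le_one.2 (by omega))
  have heq : vectorSpan ℝ s = vectorSpan ℝ (insert w s) :=
    Submodule.eq_of_le_of_finrank_le hle (hC.finrank_le_two.trans h2)
  obtain ⟨p, hp⟩ := hs
  have hspan : affineSpan ℝ s = affineSpan ℝ (insert w s) := by
    refine AffineSubspace.ext_of_direction_eq ?_ ⟨p, ?_, ?_⟩
    · rw [direction_affineSpan, direction_affineSpan, heq]
    · exact subset_affineSpan ℝ s hp
    · exact subset_affineSpan ℝ _ (Set.mem_insert_of_mem w hp)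
  rw [hspan]
  exact subset_affineSpan ℝ _ (Set.mem_insert w s)

/-- Two distinct planes (2-dimensional affine subspaces) both containing a line `L` intersect
exactly in `L`: any common point lies on `L`. -/
lemma mem_line_of_mem_planes {V : Type*} [AddCommGroup V] [Module ℝ V]
    {P Q L : AffineSubspace ℝ V} {q c : V}
    [FiniteDimensional ℝ P.direction] [FiniteDimensional ℝ Q.direction]
    (hPdim : finrank ℝ P.direction = 2) (hQdim : finrank ℝ Q.direction = 2)
    (hLP : L ≤ P) (hLQ : L ≤ Q) (hq : q ∈ L) (hLdim : finrank ℝ L.direction = 1)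
    (hPQ : P ≠ Q) (hcP : c ∈ P) (hcQ : c ∈ Q) : c ∈ L := by
  have hqP : q ∈ P := hLP hq
  have hqQ : q ∈ Q := hLQ hq
  have hdir : (P ⊓ Q).direction = P.direction ⊓ Q.direction :=
    AffineSubspace.direction_inf_of_mem hqP hqQ
  haveI : FiniteDimensional ℝ (P ⊓ Q).direction := by
    rw [hdir]; exact Submodule.finiteDimensional_of_le inf_le_left
  have hle1 : (P ⊓ Q).direction ≤ P.direction := by rw [hdir]; exact inf_le_left
  have hle2 : (P ⊓ Q).direction ≤ Q.direction := by rw [hdir]; exact inf_le_right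
  have hsmall : finrank ℝ (P ⊓ Q).direction ≤ 1 := by
    by_contra h
    push_neg at h
    have hdP : (P ⊓ Q).direction = P.direction :=
      Submodule.eq_of_le_of_finrank_le hle1 (by omega)
    have hdQ : (P ⊓ Q).direction = Q.direction :=
      Submodule.eq_of_le_of_finrank_le hle2 (by omega)
    exact hPQ (AffineSubspace.ext_of_direction_eq (hdP ▸ hdQ) ⟨q, hqP, hqQ⟩)
  have hLle : L ≤ P ⊓ Q := le_inf hLP hLQ
  have hLdir : L.direction ≤ (P ⊓ Q).direction := AffineSubspace.direction_le hLle
  haveI : FiniteDimensional ℝ L.direction := Submodule.finiteDimensional_of_le hLdir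
  have hdeq : L.direction = (P ⊓ Q).direction :=
    Submodule.eq_of_le_of_finrank_le hLdir (by omega)
  have hLeq : L = P ⊓ Q :=
    AffineSubspace.ext_of_direction_eq hdeq ⟨q, hq, hqP, hqQ⟩
  rw [hLeq]
  exact ⟨hcP, hcQ⟩

/-- **Three quadrilaterals determine their common vertex.**
Let `Q₁, Q₂, Q₃` be three planar quadrilaterals with vertex sets `{a₁,a₂,a₃,a₄}`,
`{a₁,a₄,a₅,a₆}` and `{a₁,a₂,a₇,a₆}` respectively, not all lying in a common `2`-plane.
If `Q₁', Q₂', Q₃'` is a second such triple with `aᵢ' = aᵢ` for `i ∈ {2,…,7}`, then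
`a₁' = a₁`: the vertex `a₁` can be reconstructed from the other six vertices. -/
theorem quadrilaterals_determine_vertex {V : Type*} [AddCommGroup V] [Module ℝ V]
    (a₁ a₂ a₃ a₄ a₅ a₆ a₇ a₁' : V)
    (h1 : IsPlanarQuad a₁ a₂ a₃ a₄) (h2 : IsPlanarQuad a₁ a₄ a₅ a₆)
    (h3 : IsPlanarQuad a₁ a₂ a₇ a₆)
    (hnc : ¬ Coplanar ℝ {a₁, a₂, a₃, a₄, a₅, a₆, a₇})
    (h1' : IsPlanarQuad a₁' a₂ a₃ a₄) (h2' : IsPlanarQuad a₁' a₄ a₅ a₆)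
    (h3' : IsPlanarQuad a₁' a₂ a₇ a₆)
    (hnc' : ¬ Coplanar ℝ {a₁', a₂, a₃, a₄, a₅, a₆, a₇}) :
    a₁' = a₁ := by
  by_contra hne
  -- the three planes
  set P₁ : AffineSubspace ℝ V := affineSpan ℝ {a₂, a₃, a₄} with hP₁
  set P₂ : AffineSubspace ℝ V := affineSpan ℝ {a₄, a₅, a₆} with hP₂
  set P₃ : AffineSubspace ℝ V := affineSpan ℝ {a₂, a₇, a₆} with hP₃
  have m1 : a₁ ∈ P₁ :=
    mem_affineSpan_of_coplanar_insert ⟨a₂, by simp⟩ h1.1 h1.2.2.2.2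
  have m2 : a₁ ∈ P₂ :=
    mem_affineSpan_of_coplanar_insert ⟨a₄, by simp⟩ h2.1 h2.2.2.2.2
  have m3 : a₁ ∈ P₃ :=
    mem_affineSpan_of_coplanar_insert ⟨a₂, by simp⟩ h3.1 h3.2.2.2.2
  have m1' : a₁' ∈ P₁ :=
    mem_affineSpan_of_coplanar_insert ⟨a₂, by simp⟩ h1'.1 h1'.2.2.2.2
  have m2' : a₁' ∈ P₂ :=
    mem_affineSpan_of_coplanar_insert ⟨a₄, by simp⟩ h2'.1 h2'.2.2.2.2
  have m3' : a₁' ∈ P₃ :=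
    mem_affineSpan_of_coplanar_insert ⟨a₂, by simp⟩ h3'.1 h3'.2.2.2.2
  -- finite-dimensionality and dimensions of the planes
  haveI f1 : FiniteDimensional ℝ (vectorSpan ℝ ({a₂, a₃, a₄} : Set V)) :=
    (coplanar_triple ℝ a₂ a₃ a₄).finiteDimensional_vectorSpan
  haveI f2 : FiniteDimensional ℝ (vectorSpan ℝ ({a₄, a₅, a₆} : Set V)) :=
    (coplanar_triple ℝ a₄ a₅ a₆).finiteDimensional_vectorSpan
  haveI f3 : FiniteDimensional ℝ (vectorSpan ℝ ({a₂, a₇, a₆} : Set V)) :=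
    (coplanar_triple ℝ a₂ a₇ a₆).finiteDimensional_vectorSpan
  haveI fd1 : FiniteDimensional ℝ P₁.direction := by
    rw [hP₁, direction_affineSpan]; exact f1
  haveI fd2 : FiniteDimensional ℝ P₂.direction := by
    rw [hP₂, direction_affineSpan]; exact f2
  haveI fd3 : FiniteDimensional ℝ P₃.direction := by
    rw [hP₃, direction_affineSpan]; exact f3
  have dim_of : ∀ (x y z : V) (_ : ¬ Collinear ℝ ({x, y, z} : Set V))
      [FiniteDimensional ℝ (vectorSpan ℝ ({x, y, z} : Set V))],
      finrank ℝ (vectorSpan ℝ ({x, y, z} : Set V)) = 2 := by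
    intro x y z hcol _
    have hle : finrank ℝ (vectorSpan ℝ ({x, y, z} : Set V)) ≤ 2 :=
      (coplanar_triple ℝ x y z).finrank_le_two
    have hge : 2 ≤ finrank ℝ (vectorSpan ℝ ({x, y, z} : Set V)) := by
      by_contra h
      exact hcol (collinear_iff_finrank_le_one.2 (by omega))
    omega
  have d1 : finrank ℝ P₁.direction = 2 := by
    rw [hP₁, direction_affineSpan]; exact dim_of _ _ _ h1.2.2.2.2
  have d2 : finrank ℝ P₂.direction = 2 := by
    rw [hP₂, direction_affineSpan]; exact dim_of _ _ _ h2.2.2.2.2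
  have d3 : finrank ℝ P₃.direction = 2 := by
    rw [hP₃, direction_affineSpan]; exact dim_of _ _ _ h3.2.2.2.2
  -- the line through a₁ and a₁'
  set L : AffineSubspace ℝ V := affineSpan ℝ {a₁, a₁'} with hL
  have hqL : a₁ ∈ L := subset_affineSpan ℝ _ (by simp)
  have hLdim : finrank ℝ L.direction = 1 := by
    rw [hL, direction_affineSpan, vectorSpan_pair]
    exact finrank_span_singleton (by
      intro h
      apply hne
      rw [vsub_eq_zero_iff_eq] at h
      exact h.symm)
  have hLP : ∀ {P : AffineSubspace ℝ V}, a₁ ∈ P → a₁' ∈ P → L ≤ P := by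
    intro P hP hP'
    rw [hL]
    apply affineSpan_le.2
    intro x hx
    rcases hx with rfl | hx
    · exact hP
    · rw [Set.mem_singleton_iff] at hx; subst hx; exact hP'
  have hL1 : L ≤ P₁ := hLP m1 m1'
  have hL2 : L ≤ P₂ := hLP m2 m2'
  have hL3 : L ≤ P₃ := hLP m3 m3'
  -- membership of shared vertices in the planes
  have a2P1 : a₂ ∈ P₁ := subset_affineSpan ℝ _ (by simp)
  have a4P1 : a₄ ∈ P₁ := subset_affineSpan ℝ _ (by simp)
  have a4P2 : a₄ ∈ P₂ := subset_affineSpan ℝ _ (by simp)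
  have a6P2 : a₆ ∈ P₂ := subset_affineSpan ℝ _ (by simp)
  have a2P3 : a₂ ∈ P₃ := subset_affineSpan ℝ _ (by simp)
  have a6P3 : a₆ ∈ P₃ := subset_affineSpan ℝ _ (by simp)
  -- collinearity consequence
  have coll_of : ∀ {c c' : V}, c ∈ L → c' ∈ L → Collinear ℝ ({a₁, c, c'} : Set V) := by
    intro c c' hc hc'
    have h4 : Collinear ℝ ({c, c', a₁, a₁'} : Set V) :=
      collinear_insert_insert_of_mem_affineSpan_pair hc hc'
    refine h4.subset ?_
    intro x hx
    rcases hx with rfl | rfl | hx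
    · simp
    · simp
    · rw [Set.mem_singleton_iff] at hx; subst hx; simp
  -- case analysis on plane equalities
  by_cases h12 : P₁ = P₂
  · by_cases h13 : P₁ = P₃
    · -- all planes equal: all seven points are coplanar, contradiction
      apply hnc
      have hsub : ({a₁, a₂, a₃, a₄, a₅, a₆, a₇} : Set V) ⊆ (P₁ : Set V) := by
        intro x hx
        rcases hx with rfl | rfl | rfl | rfl | rfl | rfl | hx
        · exact m1
        · exact a2P1
        · exact subset_affineSpan ℝ _ (by simp)
        · exact a4P1
        · rw [h12]; exact subset_affineSpan ℝ _ (by simp)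
        · rw [h12]; exact a6P2
        · rw [Set.mem_singleton_iff] at hx; subst hx
          rw [h13]; exact subset_affineSpan ℝ _ (by simp)
      have hvs : vectorSpan ℝ ({a₁, a₂, a₃, a₄, a₅, a₆, a₇} : Set V) ≤ P₁.direction := by
        have := affineSpan_le.2 hsub
        calc vectorSpan ℝ ({a₁, a₂, a₃, a₄, a₅, a₆, a₇} : Set V)
            = (affineSpan ℝ ({a₁, a₂, a₃, a₄, a₅, a₆, a₇} : Set V)).direction :=
              (direction_affineSpan ℝ _).symm
          _ ≤ P₁.direction := AffineSubspace.direction_le this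
      haveI : FiniteDimensional ℝ (vectorSpan ℝ ({a₁, a₂, a₃, a₄, a₅, a₆, a₇} : Set V)) :=
        Submodule.finiteDimensional_of_le hvs
      rw [coplanar_iff_finrank_le_two]
      calc finrank ℝ (vectorSpan ℝ ({a₁, a₂, a₃, a₄, a₅, a₆, a₇} : Set V))
          ≤ finrank ℝ P₁.direction := Submodule.finrank_mono hvs
        _ ≤ 2 := by omega
    · -- P₁ = P₂ ≠ P₃ : a₂ and a₆ on L, contradicting noncollinearity of {a₁, a₂, a₆}
      have h23 : P₂ ≠ P₃ := h12 ▸ h13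
      have hc2 : a₂ ∈ L := mem_line_of_mem_planes d1 d3 hL1 hL3 hqL hLdim h13 a2P1 a2P3
      have hc6 : a₆ ∈ L := mem_line_of_mem_planes d2 d3 hL2 hL3 hqL hLdim h23 a6P2 a6P3
      exact h3.2.2.1 (coll_of hc2 hc6)
  · have hc4 : a₄ ∈ L := mem_line_of_mem_planes d1 d2 hL1 hL2 hqL hLdim h12 a4P1 a4P2
    by_cases h13 : P₁ = P₃
    · -- P₁ = P₃ ≠ P₂ : a₄ and a₆ on L, contradicting noncollinearity of {a₁, a₄, a₆}
      have h23 : P₂ ≠ P₃ := fun h => h12 (h13.trans h.symm)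
      have hc6 : a₆ ∈ L := mem_line_of_mem_planes d2 d3 hL2 hL3 hqL hLdim h23 a6P2 a6P3
      exact h2.2.2.1 (coll_of hc4 hc6)
    · -- P₁ distinct from both: a₂ and a₄ on L, contradicting noncollinearity of {a₁, a₂, a₄}
      have hc2 : a₂ ∈ L := mem_line_of_mem_planes d1 d3 hL1 hL3 hqL hLdim h13 a2P1 a2P3
      exact h1.2.2.1 (coll_of hc2 hc4)
end
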